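/- arXiv:2110.02770 — 9 statements merged into one kernel-verified Lean document; each statement's English description precedes it below -/
import Mathlib

section
/- Let A ∈ {ℤ, ℝ} and let X ⊆ ℝ^d be a bounded set. Then the generalised flatness constant Flt_d^A(X), defined as the supremum of width(K) over all convex bodies K ⊆ ℝ^d containing no A-unimodular copy of X, is equal to the supremum of width(K) over all convex bodies K ⊆ ℝ^d that are A-X-free. -/
open Set Pointwise

noncomputable section

/-- The set of real numbers that are integers (the ring ℤ viewed inside ℝ). -/
def ZSet : Set ℝ := Set.range (fun z : ℤ => (z : ℝ))

/-- `T : ℝ^d → ℝ^d` is an affine `A`-unimodular transformation: `T x = M x + b` with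
`M` an integer matrix of determinant `±1` and `b ∈ A^d`. -/
def IsUnimodularMap {d : ℕ} (A : Set ℝ) (T : (Fin d → ℝ) → (Fin d → ℝ)) : Prop :=
  ∃ (M : Matrix (Fin d) (Fin d) ℤ) (b : Fin d → ℝ),
    (M.det = 1 ∨ M.det = -1) ∧ (∀ i, b i ∈ A) ∧
    ∀ x, T x = (M.map (fun z : ℤ => (z : ℝ))).mulVec x + b

/-- `Y` is an `A`-unimodular copy of `X`. -/
def IsUnimodCopy {d : ℕ} (A : Set ℝ) (X Y : Set (Fin d → ℝ)) : Prop :=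
  ∃ T, IsUnimodularMap A T ∧ Y = T '' X

/-- `K` contains an `A`-unimodular copy of `X`. -/
def ContainsCopy {d : ℕ} (A : Set ℝ) (X K : Set (Fin d → ℝ)) : Prop :=
  ∃ Y, IsUnimodCopy A X Y ∧ Y ⊆ K

/-- `K` is `A`-`X`-free: its relative interior contains no `A`-unimodular copy of `X`. -/
def IsFree {d : ℕ} (A : Set ℝ) (X K : Set (Fin d → ℝ)) : Prop :=
  ∀ Y, IsUnimodCopy A X Y → ¬ Y ⊆ intrinsicInterior ℝ K

/-- A convex body: a nonempty compact convex set. -/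
def IsConvexBody {d : ℕ} (K : Set (Fin d → ℝ)) : Prop :=
  Convex ℝ K ∧ IsCompact K ∧ K.Nonempty

/-- A polytope: the convex hull of a finite set of points. -/
def IsPolytope {d : ℕ} (K : Set (Fin d → ℝ)) : Prop :=
  ∃ F : Set (Fin d → ℝ), F.Finite ∧ K = convexHull ℝ F

/-- The width of `K` along the integer linear functional `u`. -/
def widthAlong {d : ℕ} (u : Fin d → ℤ) (K : Set (Fin d → ℝ)) : ℝ :=
  sSup {w | ∃ x ∈ K, ∃ y ∈ K, w = |(∑ i, (u i : ℝ) * x i) - ∑ i, (u i : ℝ) * y i|}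

/-- The lattice width of `K`: the infimum of its widths along nonzero integer functionals. -/
def latticeWidth {d : ℕ} (K : Set (Fin d → ℝ)) : ℝ :=
  sInf {w | ∃ u : Fin d → ℤ, u ≠ 0 ∧ w = widthAlong u K}

/-- The generalised flatness constant `Flt_d^A(X)`: the supremum of the lattice widths of all
convex bodies containing no `A`-unimodular copy of `X`. -/
def Flt (d : ℕ) (A : Set ℝ) (X : Set (Fin d → ℝ)) : ℝ :=
  sSup {w | ∃ K : Set (Fin d → ℝ), IsConvexBody K ∧ ¬ ContainsCopy A X K ∧ w = latticeWidth K}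

/-- The affine dimension of a set: the dimension of the direction of its affine span. -/
def affDim {d : ℕ} (s : Set (Fin d → ℝ)) : ℕ :=
  Module.finrank ℝ (affineSpan ℝ s).direction

/-- Minkowski difference `K ÷ S = {x | S + x ⊆ K}`. -/
def mDiff {d : ℕ} (K S : Set (Fin d → ℝ)) : Set (Fin d → ℝ) :=
  {x | ∀ s ∈ S, s + x ∈ K}

/-- The standard triangle `Δ₂ = conv{(0,0), (1,0), (0,1)} ⊆ ℝ²`. -/
def stdSimplex2 : Set (Fin 2 → ℝ) := convexHull ℝ {![0, 0], ![1, 0], ![0, 1]}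


section Aux

open Filter Topology

variable {E : Type*} [NormedAddCommGroup E] [NormedSpace ℝ E]

theorem mem_intrinsicInterior_iff' {s : Set E} {x : E} :
    x ∈ intrinsicInterior ℝ s ↔
      x ∈ affineSpan ℝ s ∧ s ∈ 𝓝[(affineSpan ℝ s : Set E)] x := by
  rw [mem_intrinsicInterior]
  constructor
  · rintro ⟨y, hy, rfl⟩
    refine ⟨y.2, ?_⟩
    rw [← map_nhds_subtype_val y, Filter.mem_map]
    exact mem_interior_iff_mem_nhds.1 hy
  · rintro ⟨hx, hs⟩
    refine ⟨⟨x, hx⟩, ?_, rfl⟩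
    rw [mem_interior_iff_mem_nhds, ← Filter.mem_map, map_nhds_subtype_val]
    exact hs

theorem combo_mem_intrinsicInterior {s : Set E} (hs : Convex ℝ s) {x₀ x₁ : E}
    (h₀ : x₀ ∈ intrinsicInterior ℝ s) (h₁ : x₁ ∈ s) {t : ℝ} (ht : t ∈ Set.Ioo 0 1) :
    (1 - t) • x₀ + t • x₁ ∈ intrinsicInterior ℝ s := by
  rw [mem_intrinsicInterior_iff'] at h₀ ⊢
  obtain ⟨hx₀L, hnb⟩ := h₀
  have hx₁L : x₁ ∈ affineSpan ℝ s := subset_affineSpan ℝ s h₁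
  have h1t : (1 : ℝ) - t ≠ 0 := by have := ht.2; intro h; linarith
  constructor
  · have := AffineSubspace.smul_vsub_vadd_mem (affineSpan ℝ s) t hx₁L hx₀L hx₀L
    have heq : t • (x₁ -ᵥ x₀) +ᵥ x₀ = (1 - t) • x₀ + t • x₁ := by
      simp only [vsub_eq_sub, vadd_eq_add]; module
    rwa [heq] at this
  · obtain ⟨U, hUo, hx₀U, hUs⟩ := mem_nhdsWithin.1 hnb
    rw [mem_nhdsWithin]
    refine ⟨(fun w => (1 - t) • w + t • x₁) '' U, ?_, ⟨x₀, hx₀U, rfl⟩, ?_⟩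
    · have hmap : IsOpenMap (fun w : E => (1 - t) • w + t • x₁) :=
        (isOpenMap_add_right (t • x₁)).comp (isOpenMap_smul₀ (G₀ := ℝ) h1t)
      exact hmap U hUo
    · rintro y ⟨⟨w, hwU, rfl⟩, hyL⟩
      have hwL : w ∈ affineSpan ℝ s := by
        have key : ((1 - t)⁻¹ : ℝ) • (((1 - t) • w + t • x₁) -ᵥ x₁) +ᵥ x₁ = w := by
          simp only [vsub_eq_sub, vadd_eq_add]
          rw [show (1 - t) • w + t • x₁ - x₁ = (1 - t) • (w - x₁) by module,
            smul_smul, inv_mul_cancel₀ h1t, one_smul]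
          abel
        have := AffineSubspace.smul_vsub_vadd_mem (affineSpan ℝ s) ((1 - t)⁻¹) hyL hx₁L hx₁L
        rwa [key] at this
      have hws : w ∈ s := hUs ⟨hwU, hwL⟩
      exact hs hws h₁ (by linarith [ht.2]) ht.1.le (by ring)

theorem sSup_image_mul' (t : ℝ) (ht : 0 < t) (S : Set ℝ) :
    sSup ((t * ·) '' S) = t * sSup S := by
  rcases S.eq_empty_or_nonempty with rfl | hne
  · simp [Real.sSup_empty]
  by_cases hbdd : BddAbove S
  · apply le_antisymm
    · refine csSup_le (hne.image _) ?_
      rintro w ⟨s, hs, rfl⟩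
      exact mul_le_mul_of_nonneg_left (le_csSup hbdd hs) ht.le
    · rw [mul_comm, ← le_div_iff₀ ht]
      refine csSup_le hne fun s hs => ?_
      rw [le_div_iff₀ ht, mul_comm]
      refine le_csSup ?_ ⟨s, hs, rfl⟩
      obtain ⟨c, hc⟩ := hbdd
      refine ⟨t * c, ?_⟩
      rintro w ⟨s', hs', rfl⟩
      exact mul_le_mul_of_nonneg_left (hc hs') ht.le
  · have hbdd' : ¬ BddAbove ((t * ·) '' S) := by
      intro ⟨c, hc⟩
      exact hbdd ⟨c / t, fun s hs => (le_div_iff₀ ht).2 (by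
        have := hc ⟨s, hs, rfl⟩; simp only [mul_comm] at this ⊢; linarith)⟩
    rw [Real.sSup_of_not_bddAbove hbdd, Real.sSup_of_not_bddAbove hbdd', mul_zero]

theorem sInf_image_mul' (t : ℝ) (ht : 0 < t) (S : Set ℝ) :
    sInf ((t * ·) '' S) = t * sInf S := by
  rcases S.eq_empty_or_nonempty with rfl | hne
  · simp [Real.sInf_empty]
  by_cases hbdd : BddBelow S
  · apply le_antisymm
    · rw [mul_comm, ← div_le_iff₀ ht]
      refine le_csInf hne fun s hs => ?_
      rw [div_le_iff₀ ht, mul_comm]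
      refine csInf_le ?_ ⟨s, hs, rfl⟩
      obtain ⟨c, hc⟩ := hbdd
      refine ⟨t * c, ?_⟩
      rintro w ⟨s', hs', rfl⟩
      exact mul_le_mul_of_nonneg_left (hc hs') ht.le
    · refine le_csInf (hne.image _) ?_
      rintro w ⟨s, hs, rfl⟩
      exact mul_le_mul_of_nonneg_left (csInf_le hbdd hs) ht.le
  · have hbdd' : ¬ BddBelow ((t * ·) '' S) := by
      intro ⟨c, hc⟩
      exact hbdd ⟨c / t, fun s hs => (div_le_iff₀ ht).2 (by
        have := hc ⟨s, hs, rfl⟩; simp only [mul_comm] at this ⊢; linarith)⟩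
    rw [Real.sInf_of_not_bddBelow hbdd, Real.sInf_of_not_bddBelow hbdd', mul_zero]

end Aux

section WidthScaling

variable {d : ℕ}

theorem widthAlong_image_combo (u : Fin d → ℤ) (K : Set (Fin d → ℝ)) (x₀ : Fin d → ℝ)
    {t : ℝ} (ht : 0 < t) :
    widthAlong u ((fun x => (1 - t) • x₀ + t • x) '' K) = t * widthAlong u K := by
  have hg : ∀ a : Fin d → ℝ,
      (∑ i, (u i : ℝ) * ((1 - t) • x₀ + t • a) i)
        = (1 - t) * (∑ i, (u i : ℝ) * x₀ i) + t * (∑ i, (u i : ℝ) * a i) := by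
    intro a
    simp only [Pi.add_apply, Pi.smul_apply, smul_eq_mul, Finset.mul_sum]
    rw [← Finset.sum_add_distrib]
    exact Finset.sum_congr rfl fun i _ => by ring
  rw [widthAlong, widthAlong, ← sSup_image_mul' t ht]
  congr 1
  ext w
  constructor
  · rintro ⟨x, ⟨a, ha, rfl⟩, y, ⟨b, hb, rfl⟩, rfl⟩
    refine ⟨|(∑ i, (u i : ℝ) * a i) - ∑ i, (u i : ℝ) * b i|, ⟨a, ha, b, hb, rfl⟩, ?_⟩
    rw [hg a, hg b, show ((1 - t) * (∑ i, (u i : ℝ) * x₀ i) + t * (∑ i, (u i : ℝ) * a i))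
        - ((1 - t) * (∑ i, (u i : ℝ) * x₀ i) + t * (∑ i, (u i : ℝ) * b i))
        = t * ((∑ i, (u i : ℝ) * a i) - ∑ i, (u i : ℝ) * b i) by ring,
      abs_mul, abs_of_pos ht]
  · rintro ⟨w', ⟨a, ha, b, hb, rfl⟩, rfl⟩
    refine ⟨_, ⟨a, ha, rfl⟩, _, ⟨b, hb, rfl⟩, ?_⟩
    rw [hg a, hg b, show ((1 - t) * (∑ i, (u i : ℝ) * x₀ i) + t * (∑ i, (u i : ℝ) * a i))
        - ((1 - t) * (∑ i, (u i : ℝ) * x₀ i) + t * (∑ i, (u i : ℝ) * b i))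
        = t * ((∑ i, (u i : ℝ) * a i) - ∑ i, (u i : ℝ) * b i) by ring,
      abs_mul, abs_of_pos ht]

theorem latticeWidth_image_combo (K : Set (Fin d → ℝ)) (x₀ : Fin d → ℝ)
    {t : ℝ} (ht : 0 < t) :
    latticeWidth ((fun x => (1 - t) • x₀ + t • x) '' K) = t * latticeWidth K := by
  rw [latticeWidth, latticeWidth, ← sInf_image_mul' t ht]
  congr 1
  ext w
  constructor
  · rintro ⟨u, hu, rfl⟩
    exact ⟨widthAlong u K, ⟨u, hu, rfl⟩, (widthAlong_image_combo u K x₀ ht).symm⟩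
  · rintro ⟨w', ⟨u, hu, rfl⟩, rfl⟩
    exact ⟨u, hu, (widthAlong_image_combo u K x₀ ht).symm⟩

end WidthScaling

/-- The generalised flatness constant equals the supremum of the lattice widths of the
`A`-`X`-free convex bodies. -/
theorem flt_eq_sSup_free_widths (d : ℕ) (A : Set ℝ) (hA : A = ZSet ∨ A = Set.univ)
    (X : Set (Fin d → ℝ)) (hX : Bornology.IsBounded X) :
    Flt d A X =
      sSup {w | ∃ K : Set (Fin d → ℝ), IsConvexBody K ∧ IsFree A X K ∧ w = latticeWidth K} := by
  classical
  rw [Flt]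
  set W₁ := {w | ∃ K : Set (Fin d → ℝ), IsConvexBody K ∧ ¬ ContainsCopy A X K ∧ w = latticeWidth K} with hW₁
  set W₂ := {w | ∃ K : Set (Fin d → ℝ), IsConvexBody K ∧ IsFree A X K ∧ w = latticeWidth K} with hW₂
  have h₁ : W₁ ⊆ W₂ := by
    rintro w ⟨K, hK, hnc, rfl⟩
    refine ⟨K, hK, ?_, rfl⟩
    intro Y hY hsub
    exact hnc ⟨Y, hY, hsub.trans intrinsicInterior_subset⟩
  have h₂ : ∀ w ∈ W₂, ∀ t : ℝ, t ∈ Set.Ioo (0:ℝ) 1 → t * w ∈ W₁ := by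
    rintro w ⟨K, ⟨hconv, hcomp, hne⟩, hfree, rfl⟩ t ht
    obtain ⟨x₀, hx₀⟩ := Set.Nonempty.intrinsicInterior hconv hne
    refine ⟨(fun x => (1 - t) • x₀ + t • x) '' K, ⟨?_, ?_, hne.image _⟩, ?_, (latticeWidth_image_combo K x₀ ht.1).symm⟩
    · have himg : (fun x : Fin d → ℝ => (1 - t) • x₀ + t • x) '' K
          = ((1 - t) • x₀) +ᵥ (t • K) := by
        rw [← Set.image_vadd, ← Set.image_smul, Set.image_image]
        rfl
      rw [himg]
      exact (hconv.smul t).vadd _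
    · exact hcomp.image (continuous_const.add (continuous_const_smul t))
    · rintro ⟨Y, hcopy, hsub⟩
      refine hfree Y hcopy fun y hy => ?_
      obtain ⟨a, ha, rfl⟩ := hsub hy
      exact combo_mem_intrinsicInterior hconv hx₀ ha ht
  rcases W₂.eq_empty_or_nonempty with h | hne2
  · have h1e : W₁ = ∅ := Set.eq_empty_of_subset_empty (h ▸ h₁)
    rw [h1e, h]
  · have hne1 : W₁.Nonempty := by
      obtain ⟨w, hw⟩ := hne2
      exact ⟨(1/2) * w, h₂ w hw (1/2) ⟨by norm_num, by norm_num⟩⟩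
    by_cases hb : BddAbove W₁
    · have hle : ∀ w ∈ W₂, w ≤ sSup W₁ := by
        intro w hw
        have key : ∀ t ∈ Set.Ioo (0:ℝ) 1, t * w ≤ sSup W₁ :=
          fun t ht => le_csSup hb (h₂ w hw t ht)
        have htend : Filter.Tendsto (fun t : ℝ => t * w) (nhdsWithin 1 (Set.Iio 1)) (nhds w) := by
          have h' : Filter.Tendsto (fun t : ℝ => t * w) (nhds 1) (nhds (1 * w)) :=
            (continuous_id.mul continuous_const).tendsto 1
          rw [one_mul] at h'
          exact h'.mono_left nhdsWithin_le_nhds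
        refine le_of_tendsto htend ?_
        filter_upwards [Ioo_mem_nhdsLT_of_mem (Set.mem_Ioc.2 ⟨zero_lt_one, le_refl (1:ℝ)⟩)]
          with t htI using key t htI
      apply le_antisymm
      · exact csSup_le_csSup ⟨sSup W₁, hle⟩ hne1 h₁
      · exact csSup_le hne2 hle
    · have hb2 : ¬ BddAbove W₂ := fun h => hb (h.mono h₁)
      rw [Real.sSup_of_not_bddAbove hb, Real.sSup_of_not_bddAbove hb2]
end
end

section
/- Let A ∈ {ℤ, ℝ} and let X ⊆ ℝ^d be a bounded set whose convex hull is full-dimensional (its affine hull is all of ℝ^d). Then every A-X-free convex body K ⊆ ℝ^d is contained in a full-dimensional A-X-free convex body, i.e. there exists a convex body K' ⊇ K that is A-X-free and whose affine hull is all of ℝ^d. -/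
open Set Pointwise

noncomputable section

/-! A convex body that is not full-dimensional lies in a hyperplane, so it is Lebesgue-null and
a small closed thickening of it still has volume below that of `conv X`, which is positive.
Unimodular affine maps preserve volume and commute with convex hulls, so no unimodular copy of
`X` fits into that convex thickening, which is full-dimensional. -/

open MeasureTheory Metric

namespace IsUnimodularMap

variable {d : ℕ} {A : Set ℝ} {T : (Fin d → ℝ) → (Fin d → ℝ)}

theorem exists_image_eq_vadd_image (hT : IsUnimodularMap A T) :
    ∃ (M : Matrix (Fin d) (Fin d) ℤ) (b : Fin d → ℝ), (M.det = 1 ∨ M.det = -1) ∧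
      ∀ s, T '' s = b +ᵥ Matrix.toLin' (M.map ((↑) : ℤ → ℝ)) '' s := by
  obtain ⟨M, b, hdet, -, hTx⟩ := hT
  refine ⟨M, b, hdet, fun s => ?_⟩
  rw [← image_vadd, ← image_comp]
  exact image_congr fun x _ => by simp [hTx x, Matrix.toLin'_apply, add_comm]

theorem volume_image (hT : IsUnimodularMap A T) (s : Set (Fin d → ℝ)) :
    volume (T '' s) = volume s := by
  obtain ⟨M, b, hdet, hTs⟩ := hT.exists_image_eq_vadd_image
  have hLdet : LinearMap.det (Matrix.toLin' (M.map ((↑) : ℤ → ℝ))) = ((M.det : ℤ) : ℝ) := by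
    rw [LinearMap.det_toLin']
    exact ((Int.castRingHom ℝ).map_det M).symm
  rw [hTs, measure_vadd, Measure.addHaar_image_linearMap, hLdet]
  rcases hdet with h | h <;> simp [h]

theorem image_convexHull (hT : IsUnimodularMap A T) (s : Set (Fin d → ℝ)) :
    T '' convexHull ℝ s = convexHull ℝ (T '' s) := by
  obtain ⟨M, b, -, hTs⟩ := hT.exists_image_eq_vadd_image
  rw [hTs, hTs, convexHull_vadd, LinearMap.image_convexHull]

end IsUnimodularMap

theorem isFree_of_volume_lt {d : ℕ} (A : Set ℝ) {X K : Set (Fin d → ℝ)} (hK : Convex ℝ K)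
    (hvol : volume K < volume (convexHull ℝ X)) : IsFree A X K := by
  rintro _ ⟨T, hT, rfl⟩ hXK
  have hconv : T '' convexHull ℝ X ⊆ K := by
    rw [hT.image_convexHull]
    exact convexHull_min (hXK.trans intrinsicInterior_subset) hK
  have := measure_mono (μ := volume) hconv
  rw [hT.volume_image] at this
  exact this.not_gt hvol

theorem Convex.addHaar_pos_of_affineSpan_eq_top {E : Type*} [NormedAddCommGroup E]
    [NormedSpace ℝ E] [FiniteDimensional ℝ E] [MeasurableSpace E] [BorelSpace E]
    (μ : Measure E) [μ.IsAddHaarMeasure] {s : Set E} (hs : Convex ℝ s)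
    (hspan : affineSpan ℝ s = ⊤) : 0 < μ s :=
  (isOpen_interior.measure_pos μ (hs.interior_nonempty_iff_affineSpan_eq_top.mpr hspan)).trans_le
    (measure_mono interior_subset)

theorem IsCompact.exists_measure_cthickening_lt {α : Type*} [MetricSpace α] [MeasurableSpace α]
    [OpensMeasurableSpace α] [ProperSpace α] {μ : Measure α} [IsFiniteMeasureOnCompacts μ]
    {s : Set α} (hs : IsCompact s) {c : ENNReal} (hc : μ s < c) :
    ∃ ε > 0, μ (cthickening ε s) < c := by
  have hlim := (tendsto_measure_cthickening_of_isCompact (μ := μ) hs).mono_left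
    (nhdsWithin_le_nhds (s := Ioi 0))
  obtain ⟨ε, hlt, hε⟩ := ((hlim.eventually_lt_const hc).and self_mem_nhdsWithin).exists
  exact ⟨ε, hε, hlt⟩

theorem affineSpan_cthickening_eq_top {E : Type*} [NormedAddCommGroup E] [NormedSpace ℝ E]
    {s : Set E} (hs : s.Nonempty) {ε : ℝ} (hε : 0 < ε) : affineSpan ℝ (cthickening ε s) = ⊤ := by
  obtain ⟨x, hx⟩ := hs
  refine top_unique ((isOpen_ball.affineSpan_eq_top ⟨x, mem_ball_self hε⟩).symm.trans_le ?_)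
  exact affineSpan_mono ℝ (ball_subset_closedBall.trans (closedBall_subset_cthickening hx ε))

theorem IsConvexBody.cthickening {d : ℕ} {K : Set (Fin d → ℝ)} (hK : IsConvexBody K) (ε : ℝ) :
    IsConvexBody (cthickening ε K) :=
  ⟨hK.1.cthickening ε, hK.2.1.cthickening, hK.2.2.mono (self_subset_cthickening K)⟩

theorem exists_fullDim_free_convexBody_general (d : ℕ) (A : Set ℝ)
    (X : Set (Fin d → ℝ))
    (hXfull : affineSpan ℝ (convexHull ℝ X) = ⊤)
    (K : Set (Fin d → ℝ)) (hK : IsConvexBody K) (hfree : IsFree A X K) :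
    ∃ K' : Set (Fin d → ℝ), IsConvexBody K' ∧ K ⊆ K' ∧ IsFree A X K' ∧
      affineSpan ℝ K' = ⊤ := by
  by_cases hKfull : affineSpan ℝ K = ⊤
  · exact ⟨K, hK, subset_rfl, hfree, hKfull⟩
  have hK0 : volume K = 0 :=
    measure_mono_null (subset_affineSpan ℝ K) (Measure.addHaar_affineSubspace volume _ hKfull)
  have hXpos : volume K < volume (convexHull ℝ X) :=
    hK0 ▸ (convex_convexHull ℝ X).addHaar_pos_of_affineSpan_eq_top volume hXfull
  obtain ⟨ε, hε, hlt⟩ := hK.2.1.exists_measure_cthickening_lt hXpos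
  exact ⟨cthickening ε K, hK.cthickening ε, self_subset_cthickening K,
    isFree_of_volume_lt A (hK.1.cthickening ε) hlt, affineSpan_cthickening_eq_top hK.2.2 hε⟩

/-- If the convex hull of the bounded set `X` is full-dimensional, every `A`-`X`-free convex
body is contained in a full-dimensional `A`-`X`-free convex body. -/
theorem exists_fullDim_free_convexBody (d : ℕ) (A : Set ℝ) (hA : A = ZSet ∨ A = Set.univ)
    (X : Set (Fin d → ℝ)) (hXbd : Bornology.IsBounded X)
    (hXfull : affineSpan ℝ (convexHull ℝ X) = ⊤)
    (K : Set (Fin d → ℝ)) (hK : IsConvexBody K) (hfree : IsFree A X K) :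
    ∃ K' : Set (Fin d → ℝ), IsConvexBody K' ∧ K ⊆ K' ∧ IsFree A X K' ∧
      affineSpan ℝ K' = ⊤ :=
  exists_fullDim_free_convexBody_general d A X hXfull K hK hfree
end
end

section
/- Let A ∈ {ℤ, ℝ} and let K, X ⊆ ℝ^d be d-dimensional convex bodies (convex bodies whose affine hull is all of ℝ^d). If K does not contain an A-unimodular copy of X, then there exists ε > 0 such that the Minkowski sum K + εB^d (where B^d is the closed Euclidean unit ball) does not contain an A-unimodular copy of X. -/
open Set Pointwise

noncomputable section

/-- The closed Euclidean unit ball in `ℝ^d`. -/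
def euclBall (d : ℕ) : Set (Fin d → ℝ) := {x | ∑ i, x i ^ 2 ≤ 1}

open Metric Filter Topology Bornology Matrix

/-! Suppose every enlargement `K + ε B^d` contains a unimodular copy `M_ε X + b_ε` of `X`. Since `X`
contains a ball and `K` is bounded, the integer matrices `M_ε` and the translations `b_ε` stay
bounded, so along a sequence `ε → 0` the matrices are eventually a single `M` and the translations
converge to some `b`. As `A` is closed, `b ∈ A^d`, and as `K` is closed, `M X + b ⊆ K`. -/

def intAffineMap {d : ℕ} (M : Matrix (Fin d) (Fin d) ℤ) (b : Fin d → ℝ) (x : Fin d → ℝ) :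
    Fin d → ℝ :=
  M.map (Int.cast : ℤ → ℝ) *ᵥ x + b

lemma containsCopy_iff {d : ℕ} {A : Set ℝ} {X K : Set (Fin d → ℝ)} :
    ContainsCopy A X K ↔ ∃ (M : Matrix (Fin d) (Fin d) ℤ) (b : Fin d → ℝ),
      (M.det = 1 ∨ M.det = -1) ∧ (∀ i, b i ∈ A) ∧ MapsTo (intAffineMap M b) X K := by
  constructor
  · rintro ⟨_, ⟨T, ⟨M, b, hdet, hb, hT⟩, rfl⟩, hsub⟩
    refine ⟨M, b, hdet, hb, fun x hx => ?_⟩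
    simpa only [intAffineMap, ← hT] using hsub (mem_image_of_mem T hx)
  · rintro ⟨M, b, hdet, hb, hmaps⟩
    exact ⟨_, ⟨intAffineMap M b, ⟨M, b, hdet, hb, fun _ => rfl⟩, rfl⟩, hmaps.image_subset⟩

lemma norm_le_one_of_mem_euclBall {d : ℕ} {x : Fin d → ℝ} (hx : x ∈ euclBall d) : ‖x‖ ≤ 1 := by
  refine (pi_norm_le_iff_of_nonneg zero_le_one).2 fun i => ?_
  rw [Real.norm_eq_abs, ← sq_le_one_iff_abs_le_one]
  exact (Finset.single_le_sum (fun j _ => sq_nonneg (x j)) (Finset.mem_univ i)).trans hx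

lemma add_smul_euclBall_subset_cthickening {d : ℕ} (K : Set (Fin d → ℝ)) {ε : ℝ} (hε : 0 ≤ ε) :
    K + ε • euclBall d ⊆ cthickening ε K := by
  rintro _ ⟨k, hk, _, ⟨v, hv, rfl⟩, rfl⟩
  refine mem_cthickening_of_dist_le _ k _ _ hk ?_
  rw [dist_eq_norm, add_sub_cancel_left, norm_smul, Real.norm_of_nonneg hε]
  exact mul_le_of_le_one_right hε (norm_le_one_of_mem_euclBall hv)

lemma IsClosed.mem_of_tendsto_of_mem_cthickening {α ι : Type*} [PseudoMetricSpace α]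
    {K : Set α} {l : Filter ι} [l.NeBot] {y : ι → α} {ε : ι → ℝ} {p : α} (hK : IsClosed K)
    (hy : Tendsto y l (𝓝 p)) (hε : Tendsto ε l (𝓝 0))
    (hmem : ∀ᶠ n in l, y n ∈ cthickening (ε n) K) : p ∈ K := by
  rw [← hK.closure_eq, closure_eq_iInter_cthickening]
  refine Set.mem_iInter₂.2 fun δ hδ => isClosed_cthickening.mem_of_tendsto hy ?_
  filter_upwards [hmem, hε.eventually (eventually_le_nhds hδ)] with n hn hεn
  exact cthickening_mono hεn K hn

section AffineBound

variable {E F : Type*} [NormedAddCommGroup E] [NormedSpace ℝ E] [NormedAddCommGroup F]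
  [NormedSpace ℝ F] {f : E →L[ℝ] F} {b : F} {z : E} {ρ R : ℝ}

lemma ContinuousLinearMap.opNorm_le_of_mapsTo_closedBall (hρ : 0 < ρ)
    (h : MapsTo (fun x => f x + b) (closedBall z ρ) (closedBall 0 R)) : ‖f‖ ≤ 2 * R / ρ := by
  have hbound : ∀ x ∈ closedBall z ρ, ‖f x + b‖ ≤ R := fun x hx => mem_closedBall_zero_iff.1 (h hx)
  have hz := hbound z (mem_closedBall_self hρ.le)
  have hR : 0 ≤ R := (norm_nonneg _).trans hz
  refine f.opNorm_le_of_unit_norm (by positivity) fun v hv => ?_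
  have hzv : z + ρ • v ∈ closedBall z ρ := by
    rw [mem_closedBall, dist_self_add_left, norm_smul, hv, Real.norm_of_nonneg hρ.le, mul_one]
  have : ρ * ‖f v‖ ≤ 2 * R := calc
    ρ * ‖f v‖ = ‖(f (z + ρ • v) + b) - (f z + b)‖ := by
      rw [add_sub_add_right_eq_sub, ← map_sub, add_sub_cancel_left, map_smul, norm_smul,
        Real.norm_of_nonneg hρ.le]
    _ ≤ R + R := norm_sub_le_of_le (hbound _ hzv) hz
    _ = 2 * R := by ring
  rw [le_div_iff₀ hρ]
  linarith

lemma norm_le_of_mapsTo_closedBall (hρ : 0 < ρ)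
    (h : MapsTo (fun x => f x + b) (closedBall z ρ) (closedBall 0 R)) :
    ‖b‖ ≤ R + 2 * R / ρ * ‖z‖ := calc
  ‖b‖ = ‖(f z + b) - f z‖ := by rw [add_sub_cancel_left]
  _ ≤ R + ‖f‖ * ‖z‖ :=
    norm_sub_le_of_le (mem_closedBall_zero_iff.1 (h (mem_closedBall_self hρ.le))) (f.le_opNorm z)
  _ ≤ R + 2 * R / ρ * ‖z‖ := by gcongr; exact f.opNorm_le_of_mapsTo_closedBall hρ h

end AffineBound

lemma abs_apply_le_opNorm_toLin' {d : ℕ} (N : Matrix (Fin d) (Fin d) ℝ) (i j : Fin d) :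
    |N i j| ≤ ‖LinearMap.toContinuousLinearMap (Matrix.toLin' N)‖ := calc
  |N i j| = ‖(N *ᵥ Pi.single j 1) i‖ := by rw [mulVec_single_one, Real.norm_eq_abs, col_apply]
  _ ≤ ‖LinearMap.toContinuousLinearMap (Matrix.toLin' N) (Pi.single j 1)‖ := norm_le_pi_norm _ i
  _ ≤ ‖LinearMap.toContinuousLinearMap (Matrix.toLin' N)‖ * ‖(Pi.single j 1 : Fin d → ℝ)‖ :=
    (LinearMap.toContinuousLinearMap (Matrix.toLin' N)).le_opNorm _
  _ = _ := by rw [Pi.norm_single, norm_one, mul_one]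

lemma isBounded_setOf_mapsTo_closedBall {d : ℕ} {z : Fin d → ℝ} {ρ R : ℝ} (hρ : 0 < ρ) :
    IsBounded {p : (Fin d → Fin d → ℤ) × (Fin d → ℝ) |
      MapsTo (intAffineMap (Matrix.of p.1) p.2) (closedBall z ρ) (closedBall 0 R)} := by
  refine isBounded_iff_forall_norm_le.2
    ⟨max (2 * R / ρ) (R + 2 * R / ρ * ‖z‖), fun ⟨M, b⟩ hmaps => ?_⟩
  set N := (Matrix.of M).map (Int.cast : ℤ → ℝ)
  have hmaps' : MapsTo (fun x => LinearMap.toContinuousLinearMap (Matrix.toLin' N) x + b)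
      (closedBall z ρ) (closedBall 0 R) := hmaps
  have hN := (LinearMap.toContinuousLinearMap (Matrix.toLin' N)).opNorm_le_of_mapsTo_closedBall
    hρ hmaps'
  refine max_le_max ((pi_norm_le_iff_of_nonneg ((norm_nonneg _).trans hN)).2 fun i =>
    (pi_norm_le_iff_of_nonneg ((norm_nonneg _).trans hN)).2 fun j => ?_)
    (norm_le_of_mapsTo_closedBall hρ hmaps')
  rw [← Int.norm_cast_real, Real.norm_eq_abs]
  exact (abs_apply_le_opNorm_toLin' N i j).trans hN

theorem containsCopy_of_forall_containsCopy_add_smul_euclBall {d : ℕ} {A : Set ℝ}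
    {K X : Set (Fin d → ℝ)} {z : Fin d → ℝ} {ρ : ℝ} (hA : IsClosed A) (hK : IsCompact K)
    (hρ : 0 < ρ) (hX : closedBall z ρ ⊆ X)
    (h : ∀ ε : ℝ, 0 < ε → ContainsCopy A X (K + ε • euclBall d)) :
    ContainsCopy A X K := by
  set ε : ℕ → ℝ := fun n => 1 / ((n : ℝ) + 1)
  have hε0 : ∀ n, 0 < ε n := fun n => by positivity
  have hε1 : ∀ n, ε n ≤ 1 := fun n => div_le_one_of_le₀ (by simp) (by positivity)
  choose M b hdet hb hmaps using fun n => containsCopy_iff.1 (h (ε n) (hε0 n))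
  replace hmaps : ∀ n, MapsTo (intAffineMap (M n) (b n)) X (cthickening (ε n) K) := fun n =>
    (hmaps n).mono_right (add_smul_euclBall_subset_cthickening K (hε0 n).le)
  obtain ⟨R, hR⟩ := (hK.isBounded.cthickening (δ := 1)).subset_closedBall 0
  have hbdd : ∀ n, (Matrix.of.symm (M n), b n) ∈ {p : (Fin d → Fin d → ℤ) × (Fin d → ℝ) |
      MapsTo (intAffineMap (Matrix.of p.1) p.2) (closedBall z ρ) (closedBall 0 R)} := fun n =>
    (hmaps n).mono hX ((cthickening_mono (hε1 n) K).trans hR)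
  obtain ⟨⟨M', b'⟩, -, φ, hφ, hlim⟩ :=
    tendsto_subseq_of_bounded (isBounded_setOf_mapsTo_closedBall hρ) hbdd
  -- the integer matrices converge in a discrete space, so they are eventually constant
  have hMφ : ∀ᶠ n in atTop, M (φ n) = Matrix.of M' := by
    have := (continuous_fst.tendsto _).comp hlim
    rw [nhds_discrete, tendsto_pure] at this
    exact this
  have hbφ : Tendsto (b ∘ φ) atTop (𝓝 b') := (continuous_snd.tendsto _).comp hlim
  have hεφ : Tendsto (ε ∘ φ) atTop (𝓝 0) :=
    tendsto_one_div_add_atTop_nhds_zero_nat.comp hφ.tendsto_atTop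
  refine containsCopy_iff.2 ⟨Matrix.of M', b', ?_, fun i => ?_, fun x hx => ?_⟩
  · obtain ⟨n, hn⟩ := hMφ.exists
    exact hn ▸ hdet (φ n)
  · exact hA.mem_of_tendsto (tendsto_pi_nhds.1 hbφ i) (Eventually.of_forall fun n => hb (φ n) i)
  · refine hK.isClosed.mem_of_tendsto_of_mem_cthickening (tendsto_const_nhds.add hbφ) hεφ ?_
    filter_upwards [hMφ] with n hn
    exact hn ▸ hmaps (φ n) hx

theorem exists_eps_enlargement_not_containsCopy_general (d : ℕ) (A : Set ℝ)
    (hA : A = ZSet ∨ A = Set.univ) (K X : Set (Fin d → ℝ))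
    (hK : IsConvexBody K)
    (hX : IsConvexBody X) (hXfull : affineSpan ℝ X = ⊤)
    (h : ¬ ContainsCopy A X K) :
    ∃ ε : ℝ, 0 < ε ∧ ¬ ContainsCopy A X (K + ε • euclBall d) := by
  have hA_closed : IsClosed A := by
    rcases hA with rfl | rfl
    exacts [Int.isClosedEmbedding_coe_real.isClosed_range, isClosed_univ]
  obtain ⟨z, hz⟩ := hX.1.interior_nonempty_iff_affineSpan_eq_top.2 hXfull
  obtain ⟨ρ, hρ, hzX⟩ := nhds_basis_closedBall.mem_iff.1 (mem_interior_iff_mem_nhds.1 hz)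
  by_contra! hcon
  exact h (containsCopy_of_forall_containsCopy_add_smul_euclBall hA_closed hK.2.1 hρ hzX hcon)

/-- If a full-dimensional convex body `K` does not contain an `A`-unimodular copy of the
full-dimensional convex body `X`, then neither does `K + ε B^d` for some `ε > 0`. -/
theorem exists_eps_enlargement_not_containsCopy (d : ℕ) (A : Set ℝ)
    (hA : A = ZSet ∨ A = Set.univ) (K X : Set (Fin d → ℝ))
    (hK : IsConvexBody K) (hKfull : affineSpan ℝ K = ⊤)
    (hX : IsConvexBody X) (hXfull : affineSpan ℝ X = ⊤)
    (h : ¬ ContainsCopy A X K) :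
    ∃ ε : ℝ, 0 < ε ∧ ¬ ContainsCopy A X (K + ε • euclBall d) :=
  exists_eps_enlargement_not_containsCopy_general d A hA K X hK hX hXfull h
end
end

section
/- Let A ∈ {ℤ, ℝ} and let K, X ⊆ ℝ^d be d-dimensional convex bodies (convex bodies whose affine hull is all of ℝ^d). If K is A-X-free and inclusion-maximal among A-X-free convex bodies (every convex body strictly containing K fails to be A-X-free), then K contains an A-unimodular copy of X. -/
open Set Pointwise

noncomputable section

set_option maxHeartbeats 1000000 in
/-- An inclusion-maximal `A`-`X`-free convex body (with `K`, `X` full-dimensional convex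
bodies) contains an `A`-unimodular copy of `X`. -/
theorem maximal_free_containsCopy (d : ℕ) (A : Set ℝ) (hA : A = ZSet ∨ A = Set.univ)
    (K X : Set (Fin d → ℝ))
    (hK : IsConvexBody K) (hKfull : affineSpan ℝ K = ⊤)
    (hX : IsConvexBody X) (hXfull : affineSpan ℝ X = ⊤)
    (hfree : IsFree A X K)
    (hmax : ∀ K' : Set (Fin d → ℝ), IsConvexBody K' → K ⊂ K' → ¬ IsFree A X K') :
    ContainsCopy A X K := by
    classical
  rcases Nat.eq_zero_or_pos d with hd | hd
  · -- trivial case `d = 0`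
    subst hd
    haveI : Subsingleton (Fin 0 → ℝ) := ⟨fun a b => funext fun i => i.elim0⟩
    obtain ⟨y, hy⟩ := hK.2.2
    refine ⟨X, ⟨id, ⟨1, 0, Or.inl Matrix.det_one, fun i => i.elim0,
      fun x => Subsingleton.elim _ _⟩, (Set.image_id X).symm⟩, fun x hx => ?_⟩
    exact (Subsingleton.elim x y) ▸ hy
  -- the thickened bodies
  set Kn : ℕ → Set (Fin d → ℝ) := fun n => K + Metric.closedBall 0 (1 / ((n : ℝ) + 1))
    with hKndef
  have hpos : ∀ n : ℕ, (0 : ℝ) < 1 / ((n : ℝ) + 1) := fun n => by positivity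
  have hKnbody : ∀ n, IsConvexBody (Kn n) :=
    fun n => ⟨hK.1.add (convex_closedBall _ _), hK.2.1.add (isCompact_closedBall _ _),
      hK.2.2.add ⟨0, Metric.mem_closedBall_self (hpos n).le⟩⟩
  have hKnclosed : ∀ n, IsClosed (Kn n) := fun n => (hKnbody n).2.1.isClosed
  have hKsub : ∀ n, K ⊆ Kn n := by
    intro n x hx
    have : x = x + 0 := by simp
    rw [this]
    exact Set.add_mem_add hx (Metric.mem_closedBall_self (hpos n).le)
  have hKnmono : ∀ {m n : ℕ}, m ≤ n → Kn n ⊆ Kn m := by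
    intro m n hmn
    apply Set.add_subset_add_left
    apply Metric.closedBall_subset_closedBall
    apply one_div_le_one_div_of_le (by positivity)
    have : (m : ℝ) ≤ n := Nat.cast_le.mpr hmn
    linarith
  have hKssub : ∀ n, K ⊂ Kn n := by
    intro n
    refine ⟨hKsub n, fun habs => ?_⟩
    set i0 : Fin d := ⟨0, hd⟩ with hi0
    obtain ⟨x, hxK, hxmax⟩ := hK.2.1.exists_isMaxOn hK.2.2 ((continuous_apply i0).continuousOn)
    set p : Fin d → ℝ := x + (1 / ((n : ℝ) + 1)) • (Pi.single i0 (1 : ℝ) : Fin d → ℝ) with hp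
    have hpmem : p ∈ Kn n := by
      show p ∈ K + Metric.closedBall 0 (1 / ((n : ℝ) + 1))
      rw [hp]
      refine Set.add_mem_add hxK ?_
      rw [Metric.mem_closedBall, dist_zero_right, norm_smul, Pi.norm_single,
        norm_one, mul_one, Real.norm_eq_abs, abs_of_pos (hpos n)]
    have hpK : p ∈ K := habs hpmem
    have hle : p i0 ≤ x i0 := hxmax hpK
    have hpi : p i0 = x i0 + 1 / ((n : ℝ) + 1) := by
      simp [hp, Pi.single_eq_same]
    rw [hpi] at hle
    linarith [hpos n]
  -- from maximality, extract data for each `n`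
  have hH : ∀ n : ℕ, ∃ (M : Matrix (Fin d) (Fin d) ℤ) (b : Fin d → ℝ),
      (M.det = 1 ∨ M.det = -1) ∧ (∀ i, b i ∈ A) ∧
      ∀ x ∈ X, (M.map (fun z : ℤ => (z : ℝ))).mulVec x + b ∈ Kn n := by
    intro n
    have hnf := hmax (Kn n) (hKnbody n) (hKssub n)
    rw [IsFree] at hnf
    push_neg at hnf
    obtain ⟨Y, ⟨T, ⟨M, b, hdet, hbA, hTx⟩, rfl⟩, hsub⟩ := hnf
    refine ⟨M, b, hdet, hbA, fun x hx => ?_⟩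
    have hmem := hsub (Set.mem_image_of_mem T hx)
    rw [hTx x] at hmem
    exact intrinsicInterior_subset hmem
  choose M b hdetM hbA hmem using hH
  -- an interior point of X
  have hXint : (interior X).Nonempty := by
    rw [hX.1.interior_nonempty_iff_affineSpan_eq_top]
    exact hXfull
  obtain ⟨x₀, hx₀⟩ := hXint
  obtain ⟨r, hr, hball⟩ := Metric.isOpen_iff.mp isOpen_interior x₀ hx₀
  have hballX : Metric.ball x₀ r ⊆ X := hball.trans interior_subset
  have hx₀X : x₀ ∈ X := interior_subset hx₀
  -- a bound on the thickened bodies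
  obtain ⟨R₀, hR₀⟩ := (hKnbody 0).2.1.isBounded.subset_closedBall (0 : Fin d → ℝ)
  set R : ℝ := max R₀ 0 with hRdef
  have hR0 : 0 ≤ R := le_max_right _ _
  have hK1 : Kn 0 ⊆ Metric.closedBall 0 R :=
    hR₀.trans (Metric.closedBall_subset_closedBall (le_max_left _ _))
  -- all images are bounded by R
  have himg : ∀ n, ∀ x ∈ X, ‖((M n).map (fun z : ℤ => (z : ℝ))).mulVec x + b n‖ ≤ R := by
    intro n x hx
    have := hK1 (hKnmono (Nat.zero_le n) (hmem n x hx))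
    rwa [Metric.mem_closedBall, dist_zero_right] at this
  -- bound on the matrix entries
  set C : ℝ := 4 * R / r with hCdef
  have hC0 : 0 ≤ C := by positivity
  have hentry : ∀ n i j, |((M n i j : ℝ))| ≤ C := by
    intro n i j
    set v : Fin d → ℝ := (r / 2) • (Pi.single j (1 : ℝ) : Fin d → ℝ) with hv
    have hvX : x₀ + v ∈ X := by
      apply hballX
      rw [Metric.mem_ball, dist_self_add_left, hv, norm_smul, Pi.norm_single, norm_one,
        mul_one, Real.norm_eq_abs, abs_of_pos (by linarith)]
      linarith
    have h1 := himg n _ hvX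
    have h2 := himg n x₀ hx₀X
    have hdiff : ‖((M n).map (fun z : ℤ => (z : ℝ))).mulVec v‖ ≤ 2 * R := by
      have heq : ((M n).map (fun z : ℤ => (z : ℝ))).mulVec v =
          (((M n).map (fun z : ℤ => (z : ℝ))).mulVec (x₀ + v) + b n) -
          (((M n).map (fun z : ℤ => (z : ℝ))).mulVec x₀ + b n) := by
        rw [Matrix.mulVec_add]; abel
      rw [heq]
      calc ‖_ - _‖ ≤ ‖_‖ + ‖_‖ := norm_sub_le _ _
        _ ≤ R + R := add_le_add h1 h2
        _ = 2 * R := by ring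
    have hcomp : (((M n).map (fun z : ℤ => (z : ℝ))).mulVec v) i = (M n i j : ℝ) * (r / 2) := by
      simp only [Matrix.mulVec, dotProduct, Matrix.map_apply, hv, Pi.smul_apply,
        Pi.single_apply, smul_eq_mul, mul_ite, mul_one, mul_zero, ite_mul, zero_mul]
      rw [Finset.sum_ite_eq' Finset.univ j (fun k => (M n i k : ℝ) * (r / 2))]
      simp [mul_comm]
    have hle := norm_le_pi_norm (((M n).map (fun z : ℤ => (z : ℝ))).mulVec v) i
    rw [hcomp, Real.norm_eq_abs, abs_mul, abs_of_pos (by linarith : (0:ℝ) < r / 2)] at hle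
    have hfin : |((M n i j : ℝ))| * (r / 2) ≤ 2 * R := hle.trans hdiff
    rw [hCdef, le_div_iff₀ hr]
    nlinarith [abs_nonneg ((M n i j : ℝ))]
  -- the bounded sequence in a product space
  set y : ℕ → (Fin d → ℝ) := fun n => ((M n).map (fun z : ℤ => (z : ℝ))).mulVec x₀ + b n
    with hydef
  set seq : ℕ → ((Fin d → Fin d → ℝ) × (Fin d → ℝ)) :=
    fun n => (fun i j => ((M n i j : ℝ)), y n) with hseqdef
  have hbound : ∀ n, seq n ∈ Metric.closedBall 0 (max C R) := by
    intro n
    rw [Metric.mem_closedBall, dist_zero_right]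
    refine norm_prod_le_iff.mpr ⟨?_, ?_⟩
    · refine le_trans ?_ (le_max_left C R)
      refine (pi_norm_le_iff_of_nonneg hC0).mpr fun i => ?_
      refine (pi_norm_le_iff_of_nonneg hC0).mpr fun j => ?_
      rw [Real.norm_eq_abs]
      exact hentry n i j
    · exact le_trans (himg n x₀ hx₀X) (le_max_right C R)
  obtain ⟨L, -, φ, hφ, hconv⟩ :=
    tendsto_subseq_of_bounded Metric.isBounded_closedBall hbound
  -- entrywise convergence of the matrices
  have hNij : ∀ i j, Filter.Tendsto (fun k => ((M (φ k) i j : ℝ))) Filter.atTop (nhds (L.1 i j)) := by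
    intro i j
    have hcont : Continuous (fun p : (Fin d → Fin d → ℝ) × (Fin d → ℝ) => p.1 i j) :=
      (continuous_apply j).comp ((continuous_apply i).comp continuous_fst)
    exact (hcont.tendsto L).comp hconv
  have hyl : Filter.Tendsto (fun k => y (φ k)) Filter.atTop (nhds L.2) :=
    (continuous_snd.tendsto L).comp hconv
  -- the limit matrix has integer entries
  have hZclosed : IsClosed (Set.range (fun z : ℤ => (z : ℝ))) :=
    Int.isClosedEmbedding_coe_real.isClosed_range
  have hint : ∀ i j, ∃ m : ℤ, (m : ℝ) = L.1 i j := by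
    intro i j
    exact hZclosed.mem_of_tendsto (hNij i j)
      (Filter.Eventually.of_forall fun k => ⟨M (φ k) i j, rfl⟩)
  choose M' hM' using hint
  have hcast : (Matrix.of M').map (fun z : ℤ => (z : ℝ)) = Matrix.of L.1 := by
    ext i j
    exact hM' i j
  -- convergence of `mulVec`
  have hmv : ∀ x : Fin d → ℝ,
      Filter.Tendsto (fun k => ((M (φ k)).map (fun z : ℤ => (z : ℝ))).mulVec x)
        Filter.atTop (nhds ((Matrix.of L.1).mulVec x)) := by
    intro x
    rw [tendsto_pi_nhds]
    intro i
    simp only [Matrix.mulVec, dotProduct, Matrix.map_apply, Matrix.of_apply]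
    exact tendsto_finset_sum _ fun j _ => (hNij i j).mul tendsto_const_nhds
  -- determinant of the limit matrix
  have hdet' : (Matrix.of M').det = 1 ∨ (Matrix.of M').det = -1 := by
    have hdtend : Filter.Tendsto
        (fun k => ((M (φ k)).map (fun z : ℤ => (z : ℝ))).det)
        Filter.atTop (nhds ((Matrix.of L.1).det)) := by
      have hcont : Continuous (fun p : (Fin d → Fin d → ℝ) × (Fin d → ℝ) =>
          (Matrix.of p.1).det) := Continuous.matrix_det (by exact continuous_fst)
      exact (hcont.tendsto L).comp hconv
    have hclosed : IsClosed ({1, -1} : Set ℝ) :=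
      (isClosed_singleton).union (isClosed_singleton)
    have hfun : (fun z : ℤ => (z : ℝ)) = ⇑(Int.castRingHom ℝ) := rfl
    have hmemd : (Matrix.of L.1).det ∈ ({1, -1} : Set ℝ) := by
      apply hclosed.mem_of_tendsto hdtend
      apply Filter.Eventually.of_forall
      intro k
      have hdm : ((M (φ k)).map (fun z : ℤ => (z : ℝ))).det = (((M (φ k)).det : ℤ) : ℝ) := by
        have h := (Int.castRingHom ℝ).map_det (M (φ k))
        rw [RingHom.mapMatrix_apply] at h
        exact h.symm
      rcases hdetM (φ k) with h | h
      · simp [Set.mem_insert_iff, hdm, h]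
      · simp [Set.mem_insert_iff, hdm, h]
    have hcd : ((Matrix.of M').det : ℝ) = (Matrix.of L.1).det := by
      have h := (Int.castRingHom ℝ).map_det (Matrix.of M')
      rw [RingHom.mapMatrix_apply] at h
      rw [← hcast]
      exact h
    rw [← hcd, Set.mem_insert_iff, Set.mem_singleton_iff] at hmemd
    rcases hmemd with h | h
    · left; exact_mod_cast h
    · right; exact_mod_cast h
  -- the limit translation vector
  set blim : Fin d → ℝ := L.2 - (Matrix.of L.1).mulVec x₀ with hblim
  have hbtend : Filter.Tendsto (fun k => b (φ k)) Filter.atTop (nhds blim) := by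
    have : ∀ k, b (φ k) = y (φ k) - ((M (φ k)).map (fun z : ℤ => (z : ℝ))).mulVec x₀ := by
      intro k
      simp only [hydef]
      abel
    simp only [this]
    exact hyl.sub (hmv x₀)
  have hblimA : ∀ i, blim i ∈ A := by
    rcases hA with hA | hA
    · intro i
      rw [hA, ZSet]
      apply hZclosed.mem_of_tendsto (((continuous_apply i).tendsto blim).comp hbtend)
      apply Filter.Eventually.of_forall
      intro k
      have := hbA (φ k) i
      rwa [hA, ZSet] at this
    · intro i
      rw [hA]
      trivial
  -- the candidate copy
  refine ⟨(fun x => ((Matrix.of M').map (fun z : ℤ => (z : ℝ))).mulVec x + blim) '' X,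
    ⟨_, ⟨Matrix.of M', blim, hdet', hblimA, fun x => rfl⟩, rfl⟩, ?_⟩
  rintro _ ⟨x, hx, rfl⟩
  rw [hcast]
  show (Matrix.of L.1).mulVec x + blim ∈ K
  -- the limit point lies in every `Kn m`
  have hT : Filter.Tendsto
      (fun k => ((M (φ k)).map (fun z : ℤ => (z : ℝ))).mulVec x + b (φ k))
      Filter.atTop (nhds ((Matrix.of L.1).mulVec x + blim)) := (hmv x).add hbtend
  have hKm : ∀ m, (Matrix.of L.1).mulVec x + blim ∈ Kn m := by
    intro m
    apply (hKnclosed m).mem_of_tendsto hT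
    filter_upwards [Filter.eventually_ge_atTop m] with k hk
    exact hKnmono (hk.trans (hφ.le_apply)) (hmem (φ k) x hx)
  -- hence it lies in K
  have hKclosed : IsClosed K := hK.2.1.isClosed
  rw [← hKclosed.closure_eq, Metric.mem_closure_iff]
  intro ε hε
  obtain ⟨m, hm⟩ := exists_nat_one_div_lt hε
  obtain ⟨a, ha, v, hv, hav⟩ := Set.mem_add.mp (hKm m)
  refine ⟨a, ha, ?_⟩
  rw [← hav, dist_self_add_left]
  rw [Metric.mem_closedBall, dist_zero_right] at hv
  calc ‖v‖ ≤ 1 / ((m : ℝ) + 1) := hv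
    _ < ε := hm
end
end

section
/- Let X ⊆ ℝ^d be a full-dimensional polytope and let K ⊆ ℝ^d be a full-dimensional convex body. Then K is ℝ-X-free if and only if for every ℤ-unimodular copy S of X, the Minkowski difference K ÷ S = {x ∈ ℝ^d : S + x ⊆ K} has affine dimension strictly less than d. -/
open Set Pointwise

noncomputable section

/-!
An ℝ-unimodular copy of `X` is a real translate `S + x` of a ℤ-unimodular copy `S`, so `K` is
ℝ-`X`-free iff no such translate lies in `int K`, i.e. iff `int K ÷ S` is empty for every `S`.
Since `S` is compact, `int K ÷ S` is open and equals `int (K ÷ S)`; and the convex set `K ÷ S`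
has empty interior exactly when its affine dimension is less than `d` (for `d > 0`; in
dimension `0` both sides of the equivalence fail).
-/

lemma intrinsicInterior_eq_interior_of_affineSpan_eq_top {d : ℕ} {K : Set (Fin d → ℝ)}
    (h : affineSpan ℝ K = ⊤) : intrinsicInterior ℝ K = interior K := by
  refine Subset.antisymm ?_ interior_subset_intrinsicInterior
  have hopen : IsOpen ((affineSpan ℝ K : Set (Fin d → ℝ))) := by rw [h]; simp
  refine interior_maximal ?_ (hopen.isOpenMap_subtype_val _ isOpen_interior)
  rintro _ ⟨y, hy, rfl⟩
  exact mem_preimage.mp (interior_subset hy)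

lemma IsPolytope.isCompact {d : ℕ} {X : Set (Fin d → ℝ)} (hX : IsPolytope X) : IsCompact X := by
  obtain ⟨F, hF, rfl⟩ := hX
  exact hF.isCompact_convexHull (𝕜 := ℝ)

section AffDim

variable {d : ℕ} {s : Set (Fin d → ℝ)}

lemma affDim_empty : affDim (∅ : Set (Fin d → ℝ)) = 0 := by
  rw [affDim, AffineSubspace.span_empty, AffineSubspace.direction_bot, finrank_bot]

lemma affDim_le : affDim s ≤ d :=
  (Submodule.finrank_le _).trans_eq (Module.finrank_fin_fun ℝ)

lemma affDim_eq_iff_affineSpan_eq_top (hs : s.Nonempty) : affDim s = d ↔ affineSpan ℝ s = ⊤ := by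
  rw [affDim, ← AffineSubspace.direction_eq_top_iff_of_nonempty (hs.mono (subset_affineSpan ℝ s))]
  constructor
  · intro h
    exact Submodule.eq_top_of_finrank_eq (h.trans (Module.finrank_fin_fun ℝ).symm)
  · intro h
    rw [h, finrank_top, Module.finrank_fin_fun]

lemma affDim_lt_iff_affineSpan_ne_top (hd : 0 < d) : affDim s < d ↔ affineSpan ℝ s ≠ ⊤ := by
  rw [affDim_le.lt_iff_ne]
  rcases s.eq_empty_or_nonempty with rfl | hs
  · rw [affDim_empty, AffineSubspace.span_empty]
    exact iff_of_true hd.ne bot_ne_top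
  · exact not_congr (affDim_eq_iff_affineSpan_eq_top hs)

lemma Convex.affDim_lt_iff_interior_eq_empty (hd : 0 < d) (hs : Convex ℝ s) :
    affDim s < d ↔ interior s = ∅ := by
  rw [affDim_lt_iff_affineSpan_ne_top hd, Ne, ← hs.interior_nonempty_iff_affineSpan_eq_top,
    not_nonempty_iff_eq_empty]

end AffDim

section MinkowskiDifference

variable {d : ℕ} {K S : Set (Fin d → ℝ)}

lemma mem_mDiff_iff {x : Fin d → ℝ} : x ∈ mDiff K S ↔ (· + x) '' S ⊆ K :=
  image_subset_iff.symm

lemma mDiff_mono {U : Set (Fin d → ℝ)} (h : U ⊆ K) : mDiff U S ⊆ mDiff K S :=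
  fun _ hx s hs => h (hx s hs)

lemma convex_mDiff (hK : Convex ℝ K) : Convex ℝ (mDiff K S) := by
  intro x hx y hy a b ha hb hab s hs
  convert hK (hx s hs) (hy s hs) ha hb hab using 1
  rw [smul_add, smul_add, add_add_add_comm, ← add_smul, hab, one_smul]

lemma isOpen_mDiff (hK : IsOpen K) (hS : IsCompact S) : IsOpen (mDiff K S) := by
  refine isOpen_iff_mem_nhds.2 fun x hx => hS.eventually_forall_of_forall_eventually fun s hs => ?_
  exact (continuous_snd.add continuous_fst).continuousAt.preimage_mem_nhds (hK.mem_nhds (hx s hs))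

lemma interior_mDiff (hS : IsCompact S) : interior (mDiff K S) = mDiff (interior K) S := by
  refine Subset.antisymm (fun x hx s hs => ?_)
    (interior_maximal (mDiff_mono interior_subset) (isOpen_mDiff isOpen_interior hS))
  refine mem_interior.2 ⟨(s + ·) '' interior (mDiff K S), ?_,
    (Homeomorph.addLeft s).isOpenMap _ isOpen_interior, mem_image_of_mem _ hx⟩
  rintro _ ⟨y, hy, rfl⟩
  exact interior_subset hy s hs

end MinkowskiDifference

section UnimodularCopies

variable {d : ℕ} {A : Set ℝ} {X : Set (Fin d → ℝ)}

lemma zero_mem_ZSet : (0 : ℝ) ∈ ZSet := ⟨0, Int.cast_zero⟩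

lemma isUnimodCopy_self (h0 : (0 : ℝ) ∈ A) (X : Set (Fin d → ℝ)) : IsUnimodCopy A X X := by
  refine ⟨id, ⟨1, 0, Or.inl Matrix.det_one, fun _ => h0, fun x => ?_⟩, (image_id X).symm⟩
  simp [Matrix.map_one (fun z : ℤ => (z : ℝ)) Int.cast_zero Int.cast_one]

lemma IsUnimodularMap.continuous {T : (Fin d → ℝ) → (Fin d → ℝ)} (hT : IsUnimodularMap A T) :
    Continuous T := by
  obtain ⟨M, b, -, -, hT⟩ := hT
  rw [funext hT]
  exact (M.map (fun z : ℤ => (z : ℝ))).mulVecLin.continuous_of_finiteDimensional.add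
    continuous_const

lemma IsUnimodCopy.isCompact {Y : Set (Fin d → ℝ)} (h : IsUnimodCopy A X Y) (hX : IsCompact X) :
    IsCompact Y := by
  obtain ⟨T, hT, rfl⟩ := h
  exact hX.image hT.continuous

lemma isUnimodCopy_univ_iff {Y : Set (Fin d → ℝ)} :
    IsUnimodCopy univ X Y ↔ ∃ S x, IsUnimodCopy ZSet X S ∧ Y = (· + x) '' S := by
  constructor
  · rintro ⟨T, ⟨M, b, hdet, -, hT⟩, rfl⟩
    refine ⟨_, b, ⟨_, ⟨M, 0, hdet, fun _ => zero_mem_ZSet, fun x => (add_zero _).symm⟩, rfl⟩, ?_⟩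
    rw [image_image, funext hT]
  · rintro ⟨_, x, ⟨T, ⟨M, b, hdet, -, hT⟩, rfl⟩, rfl⟩
    refine ⟨_, ⟨M, b + x, hdet, fun _ => mem_univ _, fun y => ?_⟩, (image_image (· + x) T X)⟩
    rw [hT, add_assoc]

end UnimodularCopies

lemma isFree_univ_iff_forall_interior_mDiff_eq_empty {d : ℕ} {X K : Set (Fin d → ℝ)}
    (hX : IsCompact X) (hK : intrinsicInterior ℝ K = interior K) :
    IsFree univ X K ↔ ∀ S, IsUnimodCopy ZSet X S → interior (mDiff K S) = ∅ := by
  have mem_interior_mDiff : ∀ S, IsUnimodCopy ZSet X S →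
      ∀ x, x ∈ interior (mDiff K S) ↔ (· + x) '' S ⊆ interior K := fun S hS x => by
    rw [interior_mDiff (hS.isCompact hX), mem_mDiff_iff]
  simp only [IsFree, hK, isUnimodCopy_univ_iff, eq_empty_iff_forall_notMem]
  constructor
  · exact fun h S hS x hx => h _ ⟨S, x, hS, rfl⟩ ((mem_interior_mDiff S hS x).1 hx)
  · rintro h _ ⟨S, x, hS, rfl⟩ hsub
    exact h S hS x ((mem_interior_mDiff S hS x).2 hsub)

lemma not_isFree_of_dim_zero {A : Set ℝ} (h0 : (0 : ℝ) ∈ A) {X K : Set (Fin 0 → ℝ)}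
    (hK : K.Nonempty) : ¬ IsFree A X K := by
  intro h
  refine h X (isUnimodCopy_self h0 X) ?_
  rw [hK.eq_univ, intrinsicInterior_eq_interior_of_affineSpan_eq_top (AffineSubspace.span_univ ..),
    interior_univ]
  exact subset_univ X

theorem realFree_iff_forall_mDiff_dim_lt_general (d : ℕ) (X : Set (Fin d → ℝ))
    (hXpoly : IsPolytope X)
    (K : Set (Fin d → ℝ)) (hK : IsConvexBody K) (hKfull : affineSpan ℝ K = ⊤) :
    IsFree Set.univ X K ↔
      ∀ S : Set (Fin d → ℝ), IsUnimodCopy ZSet X S → affDim (mDiff K S) < d := by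
  obtain ⟨hKconv, -, hKne⟩ := hK
  rcases Nat.eq_zero_or_pos d with rfl | hd
  · exact iff_of_false (not_isFree_of_dim_zero (mem_univ 0) hKne)
      fun h => Nat.not_lt_zero _ (h X (isUnimodCopy_self zero_mem_ZSet X))
  rw [isFree_univ_iff_forall_interior_mDiff_eq_empty hXpoly.isCompact
    (intrinsicInterior_eq_interior_of_affineSpan_eq_top hKfull)]
  exact forall₂_congr fun S _ => ((convex_mDiff hKconv).affDim_lt_iff_interior_eq_empty hd).symm

/-- For a full-dimensional polytope `X` and a full-dimensional convex body `K`: `K` is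
ℝ-`X`-free iff for every ℤ-unimodular copy `S` of `X` the Minkowski difference `K ÷ S` has
affine dimension strictly less than `d`. -/
theorem realFree_iff_forall_mDiff_dim_lt (d : ℕ) (X : Set (Fin d → ℝ))
    (hXpoly : IsPolytope X) (hXfull : affineSpan ℝ X = ⊤)
    (K : Set (Fin d → ℝ)) (hK : IsConvexBody K) (hKfull : affineSpan ℝ K = ⊤) :
    IsFree Set.univ X K ↔
      ∀ S : Set (Fin d → ℝ), IsUnimodCopy ZSet X S → affDim (mDiff K S) < d :=
  realFree_iff_forall_mDiff_dim_lt_general d X hXpoly K hK hKfull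
end
end

section
/- Let K₁, …, Kₙ ⊆ ℝ^d be convex bodies such that K := K₁ ∩ … ∩ Kₙ has affine dimension strictly less than d, and let x ∈ K be a point contained in the topological boundary of every Kᵢ. Then there exist nonempty finite collections of closed half-spaces {H⁺(i,j)}_{j ∈ Jᵢ}, for i = 1, …, n, such that for every i and j ∈ Jᵢ one has Kᵢ ⊆ H⁺(i,j) and x lies on the boundary hyperplane of H⁺(i,j), and the intersection of all these half-spaces ⋂_{i=1}^n ⋂_{j ∈ Jᵢ} H⁺(i,j) has affine dimension strictly less than d. -/
open Set Pointwise

noncomputable section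

/-! If some `Kᵢ` has empty interior, it lies in a hyperplane through `x`, and the two opposite
half-spaces bounded by that hyperplane already cut everything down to it. Otherwise the interiors
of the `Kᵢ` have no common point, as `⋂ Kᵢ` is not full-dimensional; separating `∏ int Kᵢ` from
the diagonal of `(ℝ^d)ⁿ` gives functionals `gᵢ`, not all zero, with `∑ gᵢ = 0` and `gᵢ ≤ gᵢ x`
on `Kᵢ`. For `y` in all the half-spaces `{gᵢ ≤ gᵢ x}` the nonnegative numbers `gᵢ x - gᵢ y` sum
to zero, so `y` lies on the hyperplane `{gᵢ = gᵢ x}` of a nonzero `gᵢ`. -/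

def IsSupportingAt {E : Type*} [AddCommGroup E] [Module ℝ E] (s : Set E) (x : E)
    (f : E →ₗ[ℝ] ℝ) : Prop :=
  f ≠ 0 ∧ ∀ y ∈ s, f x ≤ f y

def HasFlatSupportPairs {ι E : Type*} [AddCommGroup E] [Module ℝ E] (K : ι → Set E) (x : E) :
    Prop :=
  ∃ ℓ : ι → Fin 2 → E →ₗ[ℝ] ℝ, (∀ i j, IsSupportingAt (K i) x (ℓ i j)) ∧
    ∃ φ : E →ₗ[ℝ] ℝ, φ ≠ 0 ∧ ∀ y, (∀ i j, ℓ i j x ≤ ℓ i j y) → φ y = φ x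

section Supporting

variable {E : Type*} [NormedAddCommGroup E] [NormedSpace ℝ E]

theorem Convex.exists_ne_zero_forall_eq_of_interior_eq_empty [FiniteDimensional ℝ E]
    {s : Set E} (hs : Convex ℝ s) (h : interior s = ∅) {x : E} (hx : x ∈ s) :
    ∃ f : E →ₗ[ℝ] ℝ, f ≠ 0 ∧ ∀ y ∈ s, f y = f x := by
  have hspan : affineSpan ℝ s ≠ ⊤ := by
    rw [Ne, ← hs.interior_nonempty_iff_affineSpan_eq_top, h]
    exact not_nonempty_empty
  have hdir : (affineSpan ℝ s).direction < ⊤ := lt_top_iff_ne_top.2 fun htop =>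
    hspan ((AffineSubspace.direction_eq_top_iff_of_nonempty ⟨x, subset_affineSpan ℝ s hx⟩).1 htop)
  obtain ⟨f, hf, hker⟩ := (affineSpan ℝ s).direction.exists_le_ker_of_lt_top hdir
  refine ⟨f, hf, fun y hy => ?_⟩
  have : f (y - x) = 0 := hker <|
    AffineSubspace.vsub_mem_direction (subset_affineSpan ℝ s hy) (subset_affineSpan ℝ s hx)
  rwa [map_sub, sub_eq_zero] at this

theorem Convex.exists_isSupportingAt [FiniteDimensional ℝ E] {s : Set E} (hs : Convex ℝ s)
    {x : E} (hx : x ∈ s) (hxi : x ∉ interior s) : ∃ f, IsSupportingAt s x f := by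
  rcases (interior s).eq_empty_or_nonempty with h | h
  · obtain ⟨f, hf, hfx⟩ := hs.exists_ne_zero_forall_eq_of_interior_eq_empty h hx
    exact ⟨f, hf, fun y hy => (hfx y hy).ge⟩
  · obtain ⟨f, hf, hfx⟩ := geometric_hahn_banach_of_nonempty_interior_point hs hxi h
    refine ⟨-(f : E →ₗ[ℝ] ℝ), neg_ne_zero.2 fun h0 => hf ?_, fun y hy => by simpa using hfx y hy⟩
    exact ContinuousLinearMap.coe_injective h0

theorem exists_sum_eq_zero_of_iInter_interior_eq_empty {ι : Type*} [Fintype ι] {C : ι → Set E}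
    (hC : ∀ i, Convex ℝ (C i)) (hint : ∀ i, (interior (C i)).Nonempty)
    (hempty : ⋂ i, interior (C i) = ∅) {x : E} (hx : ∀ i, x ∈ C i) :
    ∃ g : ι → StrongDual ℝ E, (∃ i, g i ≠ 0) ∧ (∀ y, ∑ i, g i y = 0) ∧
      ∀ i, ∀ y ∈ C i, g i y ≤ g i x := by
  classical
  let diag : E →ₗ[ℝ] ι → E := LinearMap.pi fun _ => LinearMap.id
  have hdisj : Disjoint (interior (univ.pi C)) (LinearMap.range diag) := by
    rw [interior_pi_set finite_univ, disjoint_left]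
    rintro _ hy ⟨y, rfl⟩
    have : y ∈ ⋂ i, interior (C i) := mem_iInter.2 fun i => hy i (mem_univ i)
    rwa [hempty] at this
  obtain ⟨F, u, hF0, hFC, hFdiag⟩ := geometric_hahn_banach_of_nonempty_interior
    (convex_pi fun i _ => hC i) (LinearMap.range diag).convex hdisj
    (by rw [interior_pi_set finite_univ]; exact univ_pi_nonempty_iff.2 hint) ⟨0, zero_mem _⟩
  let g i : StrongDual ℝ E := F.comp (ContinuousLinearMap.single ℝ (fun _ => E) i)
  have hF b : F b = ∑ i, g i (b i) := by
    conv_lhs => rw [← Finset.univ_sum_single b]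
    rw [map_sum]
    rfl
  have hFdiag_eq y : F (diag y) = 0 := by
    by_contra h
    have := hFdiag _ ⟨((u - 1) / F (diag y)) • y, rfl⟩
    rw [map_smul, map_smul, smul_eq_mul, div_mul_cancel₀ _ h] at this
    linarith
  have hu : u ≤ 0 := by simpa using hFdiag 0 (zero_mem _)
  refine ⟨g, ?_, fun y => (hF (diag y)).symm.trans (hFdiag_eq y), fun i y hy => ?_⟩
  · by_contra! hg
    exact hF0 (ContinuousLinearMap.ext fun b => by simp [hF, hg])
  · have hmem : diag x + Pi.single i (y - x) ∈ univ.pi C := fun j _ => by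
      rcases eq_or_ne j i with rfl | hj
      · simpa [diag] using hy
      · simpa [diag, hj] using hx j
    have : F (Pi.single i (y - x)) ≤ u := by simpa [hFdiag_eq] using hFC _ hmem
    change g i (y - x) ≤ u at this
    linarith [map_sub (g i) y x]

variable [FiniteDimensional ℝ E] {ι : Type*} {K : ι → Set E} {x : E}

theorem hasFlatSupportPairs_of_interior_eq_empty (hK : ∀ i, Convex ℝ (K i))
    (hx : ∀ i, x ∈ K i) (hxi : ∀ i, x ∉ interior (K i)) {i₀ : ι} (hi₀ : interior (K i₀) = ∅) :
    HasFlatSupportPairs K x := by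
  classical
  choose h hh using fun i => (hK i).exists_isSupportingAt (hx i) (hxi i)
  obtain ⟨f, hf, hfx⟩ := (hK i₀).exists_ne_zero_forall_eq_of_interior_eq_empty hi₀ (hx i₀)
  refine ⟨Function.update (fun i _ => h i) i₀ ![f, -f], fun i j => ?_, f, hf, fun y hy => ?_⟩
  · rcases eq_or_ne i i₀ with rfl | hi
    · refine ⟨by fin_cases j <;> simpa using hf, fun y hy => ?_⟩
      fin_cases j <;> simp [hfx y hy]
    · simpa [hi] using hh i
  · have h0 := hy i₀ 0
    have h1 := hy i₀ 1
    simp only [Function.update_self, Matrix.cons_val_zero, Matrix.cons_val_one,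
      LinearMap.neg_apply, neg_le_neg_iff] at h0 h1
    exact le_antisymm h1 h0

theorem hasFlatSupportPairs_of_interior_nonempty [Fintype ι] (hK : ∀ i, Convex ℝ (K i))
    (hint : ∀ i, (interior (K i)).Nonempty) (hempty : ⋂ i, interior (K i) = ∅)
    (hx : ∀ i, x ∈ K i) (hxi : ∀ i, x ∉ interior (K i)) :
    HasFlatSupportPairs K x := by
  classical
  choose h hh using fun i => (hK i).exists_isSupportingAt (hx i) (hxi i)
  obtain ⟨g, ⟨i₁, hi₁⟩, hsum, hgx⟩ :=
    exists_sum_eq_zero_of_iInter_interior_eq_empty hK hint hempty hx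
  -- where `g i` vanishes it gives no half-space, so any supporting functional replaces it
  let ψ i : E →ₗ[ℝ] ℝ := if g i = 0 then h i else -(g i : E →ₗ[ℝ] ℝ)
  have hgψ i y (hy : ψ i x ≤ ψ i y) : g i y ≤ g i x := by
    by_cases hgi : g i = 0
    · simp [hgi]
    · simpa [ψ, hgi] using hy
  refine ⟨fun i _ => ψ i, fun i _ => ?_, g i₁, fun h0 => hi₁ ?_, fun y hy => ?_⟩
  · by_cases hgi : g i = 0
    · simpa [ψ, hgi] using hh i
    · refine ⟨?_, fun y hy => by simpa [ψ, hgi] using hgx i y hy⟩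
      simpa [ψ, hgi] using fun h0 => hgi (ContinuousLinearMap.coe_injective h0)
  · exact ContinuousLinearMap.coe_injective h0
  · have hle i : g i y ≤ g i x := hgψ i y (hy i 0)
    have heq := (Finset.sum_eq_sum_iff_of_le fun i _ => hle i).1 ((hsum y).trans (hsum x).symm)
    exact heq i₁ (Finset.mem_univ _)

theorem hasFlatSupportPairs_of_interior_iInter_eq_empty [Finite ι] (hK : ∀ i, Convex ℝ (K i))
    (hint : interior (⋂ i, K i) = ∅) (hx : ∀ i, x ∈ K i) (hxi : ∀ i, x ∉ interior (K i)) :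
    HasFlatSupportPairs K x := by
  have := Fintype.ofFinite ι
  by_cases h : ∀ i, (interior (K i)).Nonempty
  · rw [interior_iInter_of_finite] at hint
    exact hasFlatSupportPairs_of_interior_nonempty hK h hint hx hxi
  · push Not at h
    obtain ⟨i₀, hi₀⟩ := h
    exact hasFlatSupportPairs_of_interior_eq_empty hK hx hxi hi₀

end Supporting

theorem interior_eq_empty_of_affDim_lt {d : ℕ} {P : Set (Fin d → ℝ)} (h : affDim P < d) :
    interior P = ∅ := by
  by_contra hne
  have htop : affineSpan ℝ P = ⊤ := affineSpan_eq_top_of_nonempty_interior <|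
    (nonempty_iff_ne_empty.2 hne).mono (interior_mono (subset_convexHull ℝ P))
  rw [affDim, htop, AffineSubspace.direction_top, finrank_top, Module.finrank_fin_fun] at h
  exact h.false

theorem affDim_lt_of_subset_hyperplane {d : ℕ} {P : Set (Fin d → ℝ)}
    {φ : (Fin d → ℝ) →ₗ[ℝ] ℝ} (hφ : φ ≠ 0) {c : ℝ} (hP : P ⊆ {y | φ y = c}) : affDim P < d := by
  have hdir : (affineSpan ℝ P).direction ≤ LinearMap.ker φ := by
    rw [direction_affineSpan, vectorSpan_def, Submodule.span_le]
    rintro _ ⟨a, ha, b, hb, rfl⟩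
    simp [vsub_eq_sub, show φ a = c from hP ha, show φ b = c from hP hb]
  have hker : Module.finrank ℝ (LinearMap.ker φ) < d := by
    simpa using Submodule.finrank_lt (mt LinearMap.ker_eq_top.1 hφ)
  exact (Submodule.finrank_mono hdir).trans_lt hker

theorem exists_supporting_halfspaces_dim_lt_general (d n : ℕ)
    (K : Fin n → Set (Fin d → ℝ)) (hK : ∀ i, IsConvexBody (K i))
    (hdim : affDim (⋂ i, K i) < d)
    (x : Fin d → ℝ) (hx : x ∈ ⋂ i, K i) (hbd : ∀ i, x ∈ frontier (K i)) :
    ∃ (m : Fin n → ℕ) (ℓ : ∀ i, Fin (m i) → (Fin d → ℝ) →ₗ[ℝ] ℝ) (c : ∀ i, Fin (m i) → ℝ),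
      (∀ i, 0 < m i) ∧
      (∀ i j, ℓ i j ≠ 0) ∧
      (∀ i j, K i ⊆ {y | c i j ≤ ℓ i j y}) ∧
      (∀ i j, ℓ i j x = c i j) ∧
      affDim (⋂ i, ⋂ j : Fin (m i), {y | c i j ≤ ℓ i j y}) < d := by
  obtain ⟨ℓ, hℓ, φ, hφ, hφℓ⟩ := hasFlatSupportPairs_of_interior_iInter_eq_empty
    (fun i => (hK i).1) (interior_eq_empty_of_affDim_lt hdim) (mem_iInter.1 hx)
    (fun i => (hbd i).2)
  refine ⟨fun _ => 2, ℓ, fun i j => ℓ i j x, fun _ => two_pos, fun i j => (hℓ i j).1,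
    fun i j y hy => (hℓ i j).2 y hy, fun _ _ => rfl, ?_⟩
  exact affDim_lt_of_subset_hyperplane hφ fun y hy => hφℓ y fun i j => mem_iInter₂.1 hy i j

/-- If the intersection of convex bodies `K₁, …, Kₙ` has affine dimension `< d` and `x` lies
in the intersection and on the boundary of every `Kᵢ`, then there are nonempty finite
collections of closed half-spaces, each supporting the respective `Kᵢ` at `x`, whose common
intersection has affine dimension `< d`. -/
theorem exists_supporting_halfspaces_dim_lt (d n : ℕ) (hn : 0 < n)
    (K : Fin n → Set (Fin d → ℝ)) (hK : ∀ i, IsConvexBody (K i))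
    (hdim : affDim (⋂ i, K i) < d)
    (x : Fin d → ℝ) (hx : x ∈ ⋂ i, K i) (hbd : ∀ i, x ∈ frontier (K i)) :
    ∃ (m : Fin n → ℕ) (ℓ : ∀ i, Fin (m i) → (Fin d → ℝ) →ₗ[ℝ] ℝ) (c : ∀ i, Fin (m i) → ℝ),
      (∀ i, 0 < m i) ∧
      (∀ i j, ℓ i j ≠ 0) ∧
      (∀ i j, K i ⊆ {y | c i j ≤ ℓ i j y}) ∧
      (∀ i j, ℓ i j x = c i j) ∧
      affDim (⋂ i, ⋂ j : Fin (m i), {y | c i j ≤ ℓ i j y}) < d :=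
  exists_supporting_halfspaces_dim_lt_general d n K hK hdim x hx hbd
end
end

section
/- Let d ≥ 3 and let C₁, …, Cₙ ⊆ ℝ^d be closed convex cones. If the Minkowski sum C₁ + ⋯ + Cₙ is not a closed set, then there exist an index i ∈ {1, …, n} and a nonzero vector x ∈ ℝ^d such that the open ray {t·x : t > 0} is contained in Cᵢ and the opposite open ray {−t·x : t > 0} is contained in the Minkowski sum C₁ + ⋯ + C_{i−1} + C_{i+1} + ⋯ + Cₙ of the remaining cones. -/
open Set Pointwise

noncomputable section

/-- The Minkowski sum of the cones `C j` for `j ∈ s`. -/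
def conesSum {d n : ℕ} (C : Fin n → Set (Fin d → ℝ)) (s : Finset (Fin n)) :
    Set (Fin d → ℝ) :=
  {y | ∃ f : Fin n → (Fin d → ℝ), (∀ j ∈ s, f j ∈ C j) ∧ y = ∑ j ∈ s, f j}

/-!
If no cone `Cᵢ` contains a ray whose opposite lies in the sum of the others, then the cones are
positively independent: `∑ fᵢ = 0` with `fᵢ ∈ Cᵢ` forces every `fᵢ = 0`. The sum `∑ Cᵢ` is the
image of the closed cone `∏ Cᵢ` under the summation map, which then vanishes on that cone only at
`0`. By compactness of the unit sphere the summation map is bounded below on `∏ Cᵢ`, so a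
convergent sequence of sums lifts to a bounded, hence subconvergent, sequence in `∏ Cᵢ`.
-/

open Filter Topology

section ClosedImage

variable {E F : Type*} [NormedAddCommGroup E] [NormedSpace ℝ E] [ProperSpace E]
  [NormedAddCommGroup F] [NormedSpace ℝ F] (S : E →L[ℝ] F) {K : Set E}
  (hK : IsClosed K) (hcone : ∀ x ∈ K, ∀ t : ℝ, 0 < t → t • x ∈ K)
  (hker : ∀ x ∈ K, S x = 0 → x = 0)
include hK hcone hker

theorem exists_pos_mul_norm_le_norm_apply_of_cone :
    ∃ c > 0, ∀ x ∈ K, c * ‖x‖ ≤ ‖S x‖ := by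
  have hpos : ∀ x ∈ K ∩ Metric.sphere 0 1, 0 < ‖S x‖ := fun x ⟨hxK, hx⟩ ↦
    norm_pos_iff.2 fun h ↦ ne_zero_of_mem_unit_sphere ⟨x, hx⟩ (by simpa using hker x hxK h)
  obtain ⟨c, hc, hbound⟩ := ((isCompact_sphere (0 : E) 1).inter_left hK).exists_forall_le'
    S.continuous.norm.continuousOn hpos
  refine ⟨c, hc, fun x hx ↦ ?_⟩
  rcases eq_or_ne x 0 with rfl | hx0
  · simp
  have hnorm : 0 < ‖x‖ := norm_pos_iff.2 hx0
  have hunit : ‖x‖⁻¹ • x ∈ K ∩ Metric.sphere 0 1 :=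
    ⟨hcone x hx _ (inv_pos.2 hnorm), mem_sphere_zero_iff_norm.2 (norm_smul_inv_norm hx0)⟩
  have hcx := hbound _ hunit
  rwa [map_smul, norm_smul, norm_inv, norm_norm, le_inv_mul_iff₀ hnorm, mul_comm] at hcx

theorem isClosed_image_of_cone : IsClosed (S '' K) := by
  obtain ⟨c, hc, hbound⟩ := exists_pos_mul_norm_le_norm_apply_of_cone S hK hcone hker
  refine IsSeqClosed.isClosed fun u y hu huy ↦ ?_
  choose g hgK hgu using hu
  obtain ⟨R, hR⟩ := huy.norm.bddAbove_range
  have hg_bdd : ∀ k, g k ∈ Metric.closedBall 0 (R / c) := fun k ↦ by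
    rw [mem_closedBall_zero_iff, le_div_iff₀ hc, mul_comm]
    exact (hbound _ (hgK k)).trans (hgu k ▸ hR ⟨k, rfl⟩)
  obtain ⟨a, -, φ, hφ, hlim⟩ := tendsto_subseq_of_bounded Metric.isBounded_closedBall hg_bdd
  refine ⟨a, hK.mem_of_tendsto hlim (Eventually.of_forall fun k ↦ hgK _), ?_⟩
  refine tendsto_nhds_unique ((S.continuous.tendsto a).comp hlim) ?_
  simpa [Function.comp_def, hgu] using huy.comp hφ.tendsto_atTop

end ClosedImage

theorem conesSum_univ_eq_image {d n : ℕ} (C : Fin n → Set (Fin d → ℝ)) :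
    conesSum C Finset.univ =
      ⇑(∑ i, ContinuousLinearMap.proj i : (Fin n → Fin d → ℝ) →L[ℝ] Fin d → ℝ) '' univ.pi C := by
  ext y
  simp [conesSum, eq_comm]

theorem ray_mem_and_neg_ray_mem_conesSum_erase {d n : ℕ} {C : Fin n → Set (Fin d → ℝ)}
    (hcone : ∀ i, ∀ x ∈ C i, ∀ t : ℝ, 0 < t → t • x ∈ C i)
    {f : Fin n → Fin d → ℝ} (hf : ∀ i, f i ∈ C i) (hsum : ∑ i, f i = 0) (i : Fin n) :
    (∀ t : ℝ, 0 < t → t • f i ∈ C i) ∧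
      (∀ t : ℝ, 0 < t → -(t • f i) ∈ conesSum C (Finset.univ.erase i)) := by
  refine ⟨hcone i _ (hf i), fun t ht ↦ ⟨t • f, fun j _ ↦ hcone j _ (hf j) t ht, ?_⟩⟩
  simp only [Finset.sum_erase_eq_sub (Finset.mem_univ i), Pi.smul_apply, ← Finset.smul_sum, hsum,
    smul_zero, zero_sub]

theorem not_closed_sum_cones_exists_line_general (d n : ℕ)
    (C : Fin n → Set (Fin d → ℝ))
    (hclosed : ∀ i, IsClosed (C i))
    (hcone : ∀ i, ∀ x ∈ C i, ∀ t : ℝ, 0 < t → t • x ∈ C i)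
    (hnc : ¬ IsClosed (conesSum C Finset.univ)) :
    ∃ (i : Fin n) (x : Fin d → ℝ), x ≠ 0 ∧
      (∀ t : ℝ, 0 < t → t • x ∈ C i) ∧
      (∀ t : ℝ, 0 < t → -(t • x) ∈ conesSum C (Finset.univ.erase i)) := by
  by_contra hline
  have hindep : ∀ f : Fin n → Fin d → ℝ, (∀ i, f i ∈ C i) → ∑ i, f i = 0 → f = 0 := by
    intro f hf hsum
    by_contra hne
    obtain ⟨i, hi⟩ := Function.ne_iff.1 hne
    exact hline ⟨i, f i, hi, ray_mem_and_neg_ray_mem_conesSum_erase hcone hf hsum i⟩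
  refine hnc ?_
  rw [conesSum_univ_eq_image]
  exact isClosed_image_of_cone _ (isClosed_set_pi fun i _ ↦ hclosed i)
    (fun f hf t ht i _ ↦ hcone i _ (hf i trivial) t ht)
    fun f hf hsum ↦ hindep f (fun i ↦ hf i trivial) (by simpa using hsum)

/-- If the Minkowski sum of closed convex cones `C₁, …, Cₙ ⊆ ℝ^d` (`d ≥ 3`) is not closed,
then some `Cᵢ` contains an open ray whose opposite ray is contained in the sum of the
remaining cones. -/
theorem not_closed_sum_cones_exists_line (d n : ℕ) (hd : 3 ≤ d)
    (C : Fin n → Set (Fin d → ℝ))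
    (hconv : ∀ i, Convex ℝ (C i)) (hclosed : ∀ i, IsClosed (C i))
    (hzero : ∀ i, (0 : Fin d → ℝ) ∈ C i)
    (hcone : ∀ i, ∀ x ∈ C i, ∀ t : ℝ, 0 < t → t • x ∈ C i)
    (hnc : ¬ IsClosed (conesSum C Finset.univ)) :
    ∃ (i : Fin n) (x : Fin d → ℝ), x ≠ 0 ∧
      (∀ t : ℝ, 0 < t → t • x ∈ C i) ∧
      (∀ t : ℝ, 0 < t → -(t • x) ∈ conesSum C (Finset.univ.erase i)) :=
  not_closed_sum_cones_exists_line_general d n C hclosed hcone hnc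
end
end

section
/- Let P ⊆ ℝ² be a polygon with rational diameter l = 1 + 2a > 0 (i.e. a > −1/2) achieved by the horizontal segment S = conv{(−a, 0), (1 + a, 0)} ⊆ P; that is, P contains S, and P contains no translate of a segment conv{p, p + l'·w} with w a primitive vector of ℤ² and l' > l. Then P is contained in the horizontal strip {(x, y) ∈ ℝ² : −l ≤ y ≤ l}. -/
open Set Pointwise

noncomputable section

/-!
If `P` had a point `q` at height `|q 1| = y > l`, put `l' = 2ly/(y+l) > l` and `μ = l'/y < 1`.
The slice of the triangle `conv(S ∪ {q})` at height `±l'` has length `(1 - μ) l = l' - l`, exactly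
the gap between consecutive translates `S + (l' k, 0)`, `k ∈ ℤ`. Hence some `p ∈ S` and `k ∈ ℤ`
put `p + l' (k, ±1)` in that slice, and `P` contains a segment of length `l' > l` in the primitive
direction `(k, ±1)`.
-/

lemma vecCons_mem_segment_of_mem_Icc {c d s : ℝ} (hs : s ∈ Icc c d) :
    ![s, 0] ∈ segment ℝ ![c, 0] ![d, 0] := by
  let f : ℝ →ᵃ[ℝ] Fin 2 → ℝ := (LinearMap.id.smulRight ![1, 0]).toAffineMap
  have hf : ∀ t, f t = ![t, 0] := fun t => by ext i; fin_cases i <;> simp [f]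
  rw [← hf, ← hf, ← hf, ← image_segment, segment_eq_Icc (hs.1.trans hs.2)]
  exact mem_image_of_mem f hs

lemma exists_add_mul_int_mem_Icc {c d A B l' : ℝ} (hcd : c ≤ d) (hAB : A ≤ B) (hl' : 0 < l')
    (hgap : l' ≤ (d - c) + (B - A)) :
    ∃ k : ℤ, ∃ s ∈ Icc c d, s + l' * k ∈ Icc A B := by
  set k : ℤ := ⌈(A - d) / l'⌉
  have hk : A - d ≤ l' * k := by
    rw [← div_le_iff₀' hl']; exact Int.le_ceil _
  have hk' : l' * k < A - d + l' := by
    have := Int.ceil_lt_add_one ((A - d) / l')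
    rw [div_add_one hl'.ne', lt_div_iff₀' hl'] at this
    linarith
  refine ⟨k, max c (A - l' * k), ⟨le_max_left _ _, max_le hcd (by linarith)⟩, ?_, ?_⟩
  · linarith [le_max_right c (A - l' * k)]
  · rcases max_cases c (A - l' * k) with ⟨h, _⟩ | ⟨h, _⟩ <;> rw [h] <;> linarith

section HorizontalSegment

variable {P : Set (Fin 2 → ℝ)} {c d : ℝ}

/-- `![x, μ * q 1]` ranges over the slice at relative height `μ` of the triangle spanned by
`[c, d] × {0}` and `q`. -/
lemma vecCons_mem_of_mem_slice (hP : Convex ℝ P) (hS : ∀ s ∈ Icc c d, ![s, 0] ∈ P)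
    {q : Fin 2 → ℝ} (hq : q ∈ P) {μ x : ℝ} (hμ₀ : 0 ≤ μ) (hμ₁ : μ < 1)
    (hx : x ∈ Icc ((1 - μ) * c + μ * q 0) ((1 - μ) * d + μ * q 0)) :
    ![x, μ * q 1] ∈ P := by
  have hμ : 0 < 1 - μ := by linarith
  set r := (x - μ * q 0) / (1 - μ)
  have hr : r ∈ Icc c d := by
    constructor
    · rw [le_div_iff₀ hμ]; linarith [hx.1]
    · rw [div_le_iff₀ hμ]; linarith [hx.2]
  have hcomb : (1 - μ) • ![r, 0] + μ • q = ![x, μ * q 1] := by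
    ext i; fin_cases i <;> simp [r, field]
  rw [← hcomb]
  exact hP (hS r hr) hq hμ.le hμ₀ (by ring)

lemma exists_long_primitive_segment (hP : Convex ℝ P) (hcd : c < d)
    (hS : ∀ s ∈ Icc c d, ![s, 0] ∈ P) {q : Fin 2 → ℝ} (hq : q ∈ P) (hy : d - c < |q 1|) :
    ∃ (p : Fin 2 → ℝ) (w : Fin 2 → ℤ) (l' : ℝ), Int.gcd (w 0) (w 1) = 1 ∧ d - c < l' ∧
      convexHull ℝ {p, p + l' • (fun i => (w i : ℝ))} ⊆ P := by
  set l := d - c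
  set y := |q 1|
  obtain ⟨ε, hε, hqε⟩ : ∃ ε : ℤ, (ε = 1 ∨ ε = -1) ∧ q 1 = ε * y := by
    rcases abs_cases (q 1) with ⟨h, _⟩ | ⟨h, _⟩
    · exact ⟨1, Or.inl rfl, by simp [y, h]⟩
    · exact ⟨-1, Or.inr rfl, by simp [y, h]⟩
  have hl : 0 < l := sub_pos.2 hcd
  have hyl : 0 < y + l := by linarith
  set μ := 2 * l / (y + l)
  set l' := μ * y
  have hμ₀ : 0 < μ := by positivity
  have hμ₁ : μ < 1 := by rw [div_lt_one hyl]; linarith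
  have hll' : l < l' := by
    simp only [l', μ]; rw [div_mul_eq_mul_div, lt_div_iff₀ hyl]; nlinarith
  have hgap : l' ≤ l + ((1 - μ) * d + μ * q 0 - ((1 - μ) * c + μ * q 0)) := by
    have hμ : μ * (y + l) = 2 * l := div_mul_cancel₀ _ hyl.ne'
    linear_combination hμ
  obtain ⟨k, s, hs, hsk⟩ := exists_add_mul_int_mem_Icc hcd.le
    (by nlinarith : (1 - μ) * c + μ * q 0 ≤ (1 - μ) * d + μ * q 0) (by linarith) hgap
  have hend : ![s, 0] + l' • (fun i => ((![k, ε] i : ℤ) : ℝ)) = ![s + l' * k, μ * q 1] := by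
    ext i; fin_cases i
    · simp
    · simp [l', hqε]; ring
  refine ⟨![s, 0], ![k, ε], l', ?_, hll', ?_⟩
  · rcases hε with rfl | rfl <;> simp
  · rw [convexHull_pair, hend]
    exact hP.segment_subset (hS s hs) (vecCons_mem_of_mem_slice hP hS hq hμ₀.le hμ₁ hsk)

end HorizontalSegment

theorem rational_diameter_strip_general (P : Set (Fin 2 → ℝ))
    (hPpoly : IsPolytope P)
    (a : ℝ) (ha : -(1/2 : ℝ) < a)
    (hS : convexHull ℝ {![-a, 0], ![1 + a, 0]} ⊆ P)
    (hdiam : ∀ (p : Fin 2 → ℝ) (w : Fin 2 → ℤ) (l' : ℝ),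
      Int.gcd (w 0) (w 1) = 1 → 1 + 2 * a < l' →
      ¬ convexHull ℝ {p, p + l' • (fun i => (w i : ℝ))} ⊆ P) :
    P ⊆ {q : Fin 2 → ℝ | -(1 + 2 * a) ≤ q 1 ∧ q 1 ≤ 1 + 2 * a} := by
  obtain ⟨F, -, rfl⟩ := hPpoly
  have hlen : 1 + a - -a = 1 + 2 * a := by ring
  have hS' : ∀ s ∈ Icc (-a) (1 + a), ![s, 0] ∈ convexHull ℝ F := fun s hs =>
    hS (by rw [convexHull_pair]; exact vecCons_mem_segment_of_mem_Icc hs)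
  intro q hq
  refine abs_le.1 ?_
  by_contra! hy
  obtain ⟨p, w, l', hw, hl', hpw⟩ := exists_long_primitive_segment (convex_convexHull ℝ F)
    (by linarith) hS' hq (by rwa [hlen])
  exact hdiam p w l' hw (by rwa [hlen] at hl') hpw

/-- A polygon whose rational diameter `l = 1 + 2a > 0` is achieved by the horizontal segment
`conv{(-a,0), (1+a,0)}` is contained in the horizontal strip `{-l ≤ y ≤ l}`. -/
theorem rational_diameter_strip (P : Set (Fin 2 → ℝ))
    (hPpoly : IsPolytope P) (hPfull : affineSpan ℝ P = ⊤)
    (a : ℝ) (ha : -(1/2 : ℝ) < a)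
    (hS : convexHull ℝ {![-a, 0], ![1 + a, 0]} ⊆ P)
    (hdiam : ∀ (p : Fin 2 → ℝ) (w : Fin 2 → ℤ) (l' : ℝ),
      Int.gcd (w 0) (w 1) = 1 → 1 + 2 * a < l' →
      ¬ convexHull ℝ {p, p + l' • (fun i => (w i : ℝ))} ⊆ P) :
    P ⊆ {q : Fin 2 → ℝ | -(1 + 2 * a) ≤ q 1 ∧ q 1 ≤ 1 + 2 * a} :=
  rational_diameter_strip_general P hPpoly a ha hS hdiam
end
end

section
/- Let P ⊆ ℝ² be an ℝ-Δ₂-free polygon with rational diameter l = 1 + 2a > 1 (i.e. a > 0) achieved by the horizontal segment S = conv{(−a, 0), (1 + a, 0)} ⊆ P; that is, P contains S, and P contains no translate of a segment conv{p, p + l'·w} with w a primitive vector of ℤ² and l' > l. Then the interior of P is disjoint from every segment conv{(b − a, ε), (b + a, ε)} with b ∈ ℤ and ε ∈ {1, −1}. In particular, if a ≥ 1/2, then P ⊆ {(x, y) ∈ ℝ² : −1 ≤ y ≤ 1} and the lattice width of P is at most 2. -/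
open Set Pointwise

noncomputable section

/-!
An interior point `q = (x, ±1)` with `|x - b| ≤ a` for some `b ∈ ℤ` yields, together with the
segment `S`, a triangle `p + r • M(Δ₂) ⊆ P` with `M = [[1, b], [0, ±1]]` and `r > 1`: the apex is
pushed slightly outwards inside a ball around `q`, and the base uses the slack `2a` of `S`.
Shrinking it by `r⁻¹` towards `q` gives a unimodular copy of `Δ₂` in the interior of `P`.

For `a ≥ 1/2` every real number is within `a` of an integer, so the interior of `P` misses both
lines `y = ±1`. Joining an interior point beyond them to `0 ∈ P` would cross them inside the
interior, so the interior lies in the open strip `|y| < 1`, and `P` in its closure.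
-/

section ConvexInterior

variable {E : Type*} [AddCommGroup E] [Module ℝ E] [TopologicalSpace E]
  [IsTopologicalAddGroup E] [ContinuousSMul ℝ E] {K : Set E}

/-- `y + (r⁻¹ • p + (1 - r⁻¹) • c) = r⁻¹ • (p + r • y) + (1 - r⁻¹) • c`, the homothety of ratio
`r⁻¹` centred at `c`. -/
theorem Convex.add_mem_interior_of_add_smul_mem (hK : Convex ℝ K) {c p y : E}
    (hc : c ∈ interior K) {r : ℝ} (hr : 1 < r) (hy : p + r • y ∈ K) :
    y + (r⁻¹ • p + (1 - r⁻¹) • c) ∈ interior K := by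
  have hr0 : 0 < r := one_pos.trans hr
  have key := hK.combo_interior_self_mem_interior hc hy (a := 1 - r⁻¹) (b := r⁻¹)
    (sub_pos.2 (inv_lt_one_of_one_lt₀ hr)) (inv_nonneg.2 hr0.le) (by ring)
  convert key using 1
  rw [smul_add, smul_smul, inv_mul_cancel₀ hr0.ne', one_smul]
  abel

theorem Convex.exists_mem_interior_apply_eq (hK : Convex ℝ K) (φ : E →ₗ[ℝ] ℝ) {o w : E}
    (ho : o ∈ K) (hw : w ∈ interior K) {s : ℝ} (hos : φ o < s) (hsw : s ≤ φ w) :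
    ∃ z ∈ interior K, φ z = s := by
  set θ := (s - φ o) / (φ w - φ o)
  have hθ : θ * (φ w - φ o) = s - φ o := div_mul_cancel₀ _ (by linarith)
  refine ⟨θ • w + (1 - θ) • o, hK.combo_interior_self_mem_interior hw ho
    (div_pos (by linarith) (by linarith)) ?_ (by ring), ?_⟩
  · exact sub_nonneg.2 ((div_le_one (by linarith)).2 (by linarith))
  · simp only [map_add, map_smul, smul_eq_mul]
    linarith

end ConvexInterior

theorem isUnimodCopy_univ_image {d : ℕ} (M : Matrix (Fin d) (Fin d) ℤ)
    (hM : M.det = 1 ∨ M.det = -1) (v : Fin d → ℝ) (X : Set (Fin d → ℝ)) :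
    IsUnimodCopy univ X ((fun x => (M.map (fun z : ℤ => (z : ℝ))).mulVec x + v) '' X) :=
  ⟨_, ⟨M, v, hM, fun _ => mem_univ _, fun _ => rfl⟩, rfl⟩

theorem add_apply_mem_of_mem_stdSimplex2 {K : Set (Fin 2 → ℝ)} (hK : Convex ℝ K)
    (L : (Fin 2 → ℝ) →ₗ[ℝ] (Fin 2 → ℝ)) {p : Fin 2 → ℝ} (h₀ : p ∈ K)
    (h₁ : p + L ![1, 0] ∈ K) (h₂ : p + L ![0, 1] ∈ K) {x : Fin 2 → ℝ}
    (hx : x ∈ stdSimplex2) : p + L x ∈ K := by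
  have hconv : Convex ℝ (L ⁻¹' ((fun y => p + y) ⁻¹' K)) :=
    (hK.translate_preimage_right p).linear_preimage L
  refine convexHull_min ?_ hconv hx
  rintro y (rfl | rfl | rfl)
  · have hzero : (![0, 0] : Fin 2 → ℝ) = 0 := by ext i; fin_cases i <;> rfl
    simpa [hzero] using h₀
  · exact h₁
  · exact h₂

theorem mem_convexHull_horizontal_pair_iff {s t y : ℝ} (hst : s < t) {q : Fin 2 → ℝ} :
    q ∈ convexHull ℝ {![s, y], ![t, y]} ↔ q 1 = y ∧ s ≤ q 0 ∧ q 0 ≤ t := by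
  rw [convexHull_pair]
  constructor
  · rintro ⟨u, v, hu, hv, huv, rfl⟩
    obtain rfl : u = 1 - v := by linarith
    simp only [Pi.add_apply, Pi.smul_apply, Matrix.cons_val_zero, Matrix.cons_val_one,
      smul_eq_mul]
    refine ⟨by ring, by nlinarith, by nlinarith⟩
  · rintro ⟨h1, h0l, h0r⟩
    have hts : 0 < t - s := sub_pos.2 hst
    refine ⟨(t - q 0) / (t - s), (q 0 - s) / (t - s), div_nonneg (by linarith) hts.le,
      div_nonneg (by linarith) hts.le, by field_simp; ring, ?_⟩
    refine funext (Fin.forall_fin_two.2 ⟨?_, ?_⟩) <;>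
      simp only [Pi.add_apply, Pi.smul_apply, Matrix.cons_val_zero, Matrix.cons_val_one,
        smul_eq_mul, h1] <;>
      field_simp <;> ring

theorem exists_enlarged_triangle {P : Set (Fin 2 → ℝ)} {a : ℝ} (ha : 0 < a)
    (hS : convexHull ℝ {![-a, 0], ![1 + a, 0]} ⊆ P) {q : Fin 2 → ℝ} (hq : q ∈ interior P)
    (b : ℤ) (hqb : |q 0 - b| ≤ a) :
    ∃ (p : Fin 2 → ℝ) (r : ℝ), 1 < r ∧ p ∈ P ∧ p + r • ![1, 0] ∈ P ∧
      p + r • ![(b : ℝ), q 1] ∈ P := by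
  obtain ⟨δ, hδ, hball⟩ := Metric.isOpen_iff.1 isOpen_interior q hq
  set C := 1 + |(b : ℝ)| + |q 1|
  have hC : 0 < C := by positivity
  set ρ := min (2 * a) (δ / (2 * C))
  have hρ : 0 < ρ := lt_min (by linarith) (by positivity)
  have hρa : ρ ≤ 2 * a := min_le_left _ _
  have hρC : ρ * C < δ := by
    calc ρ * C ≤ δ / (2 * C) * C := mul_le_mul_of_nonneg_right (min_le_right _ _) hC.le
      _ < δ := by field_simp; linarith
  -- the base `[d', d' + 1 + ρ]` must fit into `[-a, 1 + a]`, which the slack `2 * a` allows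
  set d' := min (q 0 - b) (a - ρ)
  obtain ⟨hdl, hdr⟩ := abs_le.1 hqb
  have hd'q : q 0 - b - ρ ≤ d' := le_min (by linarith) (by linarith)
  have hd'q' : d' ≤ q 0 - b := min_le_left _ _
  have hd'a : -a ≤ d' := le_min hdl (by linarith)
  have hd'a' : d' ≤ a - ρ := min_le_right _ _
  have hbase : ∀ v, -a ≤ v → v ≤ 1 + a → ![v, 0] ∈ P := fun v hl hr =>
    hS ((mem_convexHull_horizontal_pair_iff (by linarith)).2 (by simp [hl, hr]))
  refine ⟨![d', 0], 1 + ρ, by linarith, hbase _ (by linarith) (by linarith), ?_, ?_⟩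
  · convert hbase (d' + (1 + ρ)) (by linarith) (by linarith) using 1
    ext i; fin_cases i <;> simp
  · have hb := mul_le_mul_of_nonneg_left (le_abs_self (b : ℝ)) hρ.le
    have hb' := mul_le_mul_of_nonneg_left (neg_abs_le (b : ℝ)) hρ.le
    have hq1 := mul_le_mul_of_nonneg_left (le_abs_self (q 1)) hρ.le
    have hq1' := mul_le_mul_of_nonneg_left (neg_abs_le (q 1)) hρ.le
    refine interior_subset (hball ((dist_pi_lt_iff hδ).2 (Fin.forall_fin_two.2 ⟨?_, ?_⟩))) <;>
      simp only [Real.dist_eq, abs_sub_lt_iff, Pi.add_apply, Pi.smul_apply, smul_eq_mul,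
        Matrix.cons_val_zero, Matrix.cons_val_one] <;>
      constructor <;> linarith

theorem lt_abs_sub_intCast_of_mem_interior {P : Set (Fin 2 → ℝ)} (hP : Convex ℝ P)
    (hfree : IsFree univ stdSimplex2 P) {a : ℝ} (ha : 0 < a)
    (hS : convexHull ℝ {![-a, 0], ![1 + a, 0]} ⊆ P) {q : Fin 2 → ℝ} (hq : q ∈ interior P)
    (hq1 : q 1 = 1 ∨ q 1 = -1) (b : ℤ) : a < |q 0 - b| := by
  by_contra! hqb
  obtain ⟨p, r, hr, h₀, h₁, h₂⟩ := exists_enlarged_triangle ha hS hq b hqb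
  obtain ⟨e, he, hqe⟩ : ∃ e : ℤ, (e = 1 ∨ e = -1) ∧ q 1 = e := by
    rcases hq1 with h | h
    exacts [⟨1, Or.inl rfl, by simp [h]⟩, ⟨-1, Or.inr rfl, by simp [h]⟩]
  set M : Matrix (Fin 2) (Fin 2) ℤ := !![1, b; 0, e]
  have hMdet : M.det = 1 ∨ M.det = -1 := by simpa [M, Matrix.det_fin_two_of] using he
  set L := r • (M.map (fun z : ℤ => (z : ℝ))).mulVecLin
  have hL₁ : L ![1, 0] = r • ![1, 0] := by
    ext i; fin_cases i <;> simp [L, M]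
  have hL₂ : L ![0, 1] = r • ![(b : ℝ), q 1] := by
    ext i; fin_cases i <;> simp [L, M, hqe]
  refine hfree _ (isUnimodCopy_univ_image M hMdet (r⁻¹ • p + (1 - r⁻¹) • q) stdSimplex2) ?_
  rintro _ ⟨x, hx, rfl⟩
  refine interior_subset_intrinsicInterior (hP.add_mem_interior_of_add_smul_mem hq hr ?_)
  exact add_apply_mem_of_mem_stdSimplex2 hP L h₀ (hL₁ ▸ h₁) (hL₂ ▸ h₂) hx

theorem abs_apply_one_lt_one_of_mem_interior {P : Set (Fin 2 → ℝ)} (hP : Convex ℝ P)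
    (h₀ : (0 : Fin 2 → ℝ) ∈ P) (hlevel : ∀ z ∈ interior P, |z 1| ≠ 1) {w : Fin 2 → ℝ}
    (hw : w ∈ interior P) : |w 1| < 1 := by
  by_contra! hw1
  obtain ⟨z, hz, hz1⟩ : ∃ z ∈ interior P, |z 1| = 1 := by
    rcases le_abs'.1 hw1 with hneg | hpos
    · obtain ⟨z, hz, hz1⟩ := hP.exists_mem_interior_apply_eq (-LinearMap.proj 1) h₀ hw
        (s := 1) (by simp) (show (1 : ℝ) ≤ -w 1 by linarith)
      change -z 1 = 1 at hz1
      exact ⟨z, hz, by rw [show z 1 = -1 by linarith, abs_neg, abs_one]⟩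
    · obtain ⟨z, hz, hz1⟩ := hP.exists_mem_interior_apply_eq (LinearMap.proj 1) h₀ hw
        (s := 1) (by simp) hpos
      change z 1 = 1 at hz1
      exact ⟨z, hz, by rw [hz1, abs_one]⟩
  exact hlevel z hz hz1

theorem subset_abs_apply_one_le_one {P : Set (Fin 2 → ℝ)} (hP : Convex ℝ P)
    (hint : (interior P).Nonempty) (h : ∀ w ∈ interior P, |w 1| < 1) :
    P ⊆ {q | |q 1| ≤ 1} :=
  calc P ⊆ closure P := subset_closure
    _ = closure (interior P) := (hP.closure_interior_eq_closure_of_nonempty_interior hint).symm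
    _ ⊆ {q | |q 1| ≤ 1} :=
      closure_minimal (fun w hw => (h w hw).le) (isClosed_le (by fun_prop) continuous_const)

section LatticeWidth

variable {d : ℕ}

theorem widthAlong_nonneg (u : Fin d → ℤ) (K : Set (Fin d → ℝ)) : 0 ≤ widthAlong u K :=
  Real.sSup_nonneg fun _ ⟨_, _, _, _, hw⟩ => hw ▸ abs_nonneg _

theorem widthAlong_le {u : Fin d → ℤ} {K : Set (Fin d → ℝ)} {c : ℝ} (hc : 0 ≤ c)
    (h : ∀ x ∈ K, ∀ y ∈ K, |(∑ i, (u i : ℝ) * x i) - ∑ i, (u i : ℝ) * y i| ≤ c) :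
    widthAlong u K ≤ c :=
  Real.sSup_le (fun _ ⟨x, hx, y, hy, hw⟩ => hw ▸ h x hx y hy) hc

theorem latticeWidth_le_widthAlong {u : Fin d → ℤ} (hu : u ≠ 0) (K : Set (Fin d → ℝ)) :
    latticeWidth K ≤ widthAlong u K :=
  csInf_le ⟨0, fun _ ⟨v, _, hw⟩ => hw ▸ widthAlong_nonneg v K⟩ ⟨u, hu, rfl⟩

end LatticeWidth

theorem latticeWidth_le_two_of_subset {P : Set (Fin 2 → ℝ)} (hP : P ⊆ {q | |q 1| ≤ 1}) :
    latticeWidth P ≤ 2 := by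
  refine (latticeWidth_le_widthAlong (u := ![0, 1]) (by simp) P).trans
    (widthAlong_le zero_le_two fun x hx y hy => ?_)
  have hx1 : |x 1| ≤ 1 := hP hx
  have hy1 : |y 1| ≤ 1 := hP hy
  simp only [Fin.sum_univ_two, Matrix.cons_val_zero, Matrix.cons_val_one, Int.cast_zero,
    Int.cast_one, zero_mul, one_mul, zero_add]
  exact (abs_sub _ _).trans (by linarith)

theorem free_polygon_forbidden_segments_general (P : Set (Fin 2 → ℝ))
    (hPpoly : IsPolytope P) (hPfull : affineSpan ℝ P = ⊤)
    (hfree : IsFree Set.univ stdSimplex2 P)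
    (a : ℝ) (ha : 0 < a)
    (hS : convexHull ℝ {![-a, 0], ![1 + a, 0]} ⊆ P) :
    (∀ (b : ℤ) (ε : ℝ), (ε = 1 ∨ ε = -1) →
      interior P ∩ convexHull ℝ {![(b : ℝ) - a, ε], ![(b : ℝ) + a, ε]} = ∅) ∧
    ((1/2 : ℝ) ≤ a →
      P ⊆ {q : Fin 2 → ℝ | -1 ≤ q 1 ∧ q 1 ≤ 1} ∧ latticeWidth P ≤ 2) := by
  have hP : Convex ℝ P := by
    obtain ⟨F, -, rfl⟩ := hPpoly
    exact convex_convexHull ℝ F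
  have hforbid (q : Fin 2 → ℝ) (hq : q ∈ interior P) (hq1 : q 1 = 1 ∨ q 1 = -1) (b : ℤ) :
      a < |q 0 - b| :=
    lt_abs_sub_intCast_of_mem_interior hP hfree ha hS hq hq1 b
  refine ⟨fun b ε hε => eq_empty_iff_forall_notMem.2 fun q ⟨hq, hqseg⟩ => ?_, fun ha2 => ?_⟩
  · obtain ⟨hq1, hl, hr⟩ := (mem_convexHull_horizontal_pair_iff (by linarith)).1 hqseg
    exact (hforbid q hq (hq1 ▸ hε) b).not_ge (abs_le.2 ⟨by linarith, by linarith⟩)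
  · have hlevel (z : Fin 2 → ℝ) (hz : z ∈ interior P) : |z 1| ≠ 1 := fun hz1 =>
      (hforbid z hz ((abs_eq zero_le_one).1 hz1) (round (z 0))).not_ge
        ((abs_sub_round _).trans ha2)
    have h₀ : (0 : Fin 2 → ℝ) ∈ P :=
      hS ((mem_convexHull_horizontal_pair_iff (by linarith)).2
        ⟨rfl, neg_nonpos.2 ha.le, show (0 : ℝ) ≤ 1 + a by linarith⟩)
    have hstrip := subset_abs_apply_one_le_one hP
      (hP.interior_nonempty_iff_affineSpan_eq_top.2 hPfull)
      fun w hw => abs_apply_one_lt_one_of_mem_interior hP h₀ hlevel hw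
    exact ⟨fun q hq => abs_le.1 (hstrip hq), latticeWidth_le_two_of_subset hstrip⟩

/-- For an ℝ-`Δ₂`-free polygon with rational diameter `l = 1 + 2a > 1` achieved by the
horizontal segment `conv{(-a,0), (1+a,0)}`, the interior of `P` misses every segment
`conv{(b-a, ±1), (b+a, ±1)}` with `b ∈ ℤ`; in particular if `a ≥ 1/2` then `P` lies in the
strip `{-1 ≤ y ≤ 1}` and has lattice width at most 2. -/
theorem free_polygon_forbidden_segments (P : Set (Fin 2 → ℝ))
    (hPpoly : IsPolytope P) (hPfull : affineSpan ℝ P = ⊤)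
    (hfree : IsFree Set.univ stdSimplex2 P)
    (a : ℝ) (ha : 0 < a)
    (hS : convexHull ℝ {![-a, 0], ![1 + a, 0]} ⊆ P)
    (hdiam : ∀ (p : Fin 2 → ℝ) (w : Fin 2 → ℤ) (l' : ℝ),
      Int.gcd (w 0) (w 1) = 1 → 1 + 2 * a < l' →
      ¬ convexHull ℝ {p, p + l' • (fun i => (w i : ℝ))} ⊆ P) :
    (∀ (b : ℤ) (ε : ℝ), (ε = 1 ∨ ε = -1) →
      interior P ∩ convexHull ℝ {![(b : ℝ) - a, ε], ![(b : ℝ) + a, ε]} = ∅) ∧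
    ((1/2 : ℝ) ≤ a →
      P ⊆ {q : Fin 2 → ℝ | -1 ≤ q 1 ∧ q 1 ≤ 1} ∧ latticeWidth P ≤ 2) :=
  free_polygon_forbidden_segments_general P hPpoly hPfull hfree a ha hS
end
end
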